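/- arXiv:1708.01383 — 6 statements merged into one kernel-verified Lean document; each statement's English description precedes it below -/
import Mathlib

section
/- For every epoch t ≥ 1 of SAGA-RR and every iteration index 0 ≤ i < N, the aggregate second-order moment of the history variables satisfies the exact identity E[Σ_{n=1}^N ‖φ_{i,n}^t‖²] = Σ_{n'=1}^{i} E‖w_{n'}^t‖² + ((N−i)/N) Σ_{n=1}^N E‖w_n^{t−1}‖². -/
open MeasureTheory ProbabilityTheory Finset
open scoped RealInnerProductSpace ENNReal

/-
After `i` steps of epoch `t`, the samples drawn so far hold the iterates `w^t_1, …, w^t_i`, and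
every other sample `n` still holds the iterate of epoch `t - 1` written when it was drawn there, at
position `(σ^{t-1})⁻¹ n`. For the undrawn sample `n = σ^t(j)` that position is
`(σ^{t-1})⁻¹ (σ^t j)`; the iterates of epoch `t - 1` are functions of `σ^0, …, σ^{t-1}` only, and
`σ^t` is uniform and independent of these, so the position is uniform on `{1, …, N}` and
independent of those iterates. Each of the `N - i` undrawn samples therefore contributes
`(1/N) ∑ₙ E‖w^{t-1}_n‖²`.
-/

structure IsSagaPath {E : Type*} [AddCommGroup E] [Module ℝ E] {N : ℕ} (Qg : Fin N → E → E)
    (μ : ℝ) (s : ℕ → Equiv.Perm (Fin N)) (w : ℕ → ℕ → E) (φ : ℕ → ℕ → Fin N → E) : Prop where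
  iterate_zero : w 0 0 = 0
  grad_history_zero : ∀ n, Qg n (φ 0 0 n) = 0
  iterate_succ : ∀ (t : ℕ) (i : Fin N), w t (i + 1) = w t i - μ •
    (Qg (s t i) (w t i) - Qg (s t i) (φ t i (s t i)) + (N : ℝ)⁻¹ • ∑ m, Qg m (φ t i m))
  history_succ_self : ∀ (t : ℕ) (i : Fin N), φ t (i + 1) (s t i) = w t (i + 1)
  history_succ_of_ne : ∀ (t : ℕ) (i m : Fin N), m ≠ s t i → φ t (i + 1) m = φ t i m
  iterate_epoch : ∀ t, w (t + 1) 0 = w t N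
  history_epoch : ∀ t m, φ (t + 1) 0 m = φ t N m

namespace IsSagaPath

variable {E : Type*} [AddCommGroup E] [Module ℝ E] {N : ℕ} {Qg : Fin N → E → E} {μ : ℝ}
  {s s' : ℕ → Equiv.Perm (Fin N)} {w w' : ℕ → ℕ → E} {φ φ' : ℕ → ℕ → Fin N → E}

theorem history_apply_of_lt (h : IsSagaPath Qg μ s w φ) (t : ℕ) {i : ℕ} (hi : i ≤ N)
    {j : Fin N} (hj : (j : ℕ) < i) : φ t i (s t j) = w t (j + 1) := by
  induction i with
  | zero => omega
  | succ i ih =>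
    rcases (Nat.lt_succ_iff_lt_or_eq.mp hj) with hj | hj
    · have hne : s t j ≠ s t ⟨i, hi⟩ := fun he => by
        have := congrArg Fin.val ((s t).injective he); simp at this; omega
      rw [← ih (by omega) hj]
      exact h.history_succ_of_ne t ⟨i, hi⟩ _ hne
    · obtain rfl : j = ⟨i, hi⟩ := Fin.ext hj
      exact h.history_succ_self t ⟨i, hi⟩

theorem history_apply_of_le (h : IsSagaPath Qg μ s w φ) (t : ℕ) {i : ℕ} (hi : i ≤ N)
    {j : Fin N} (hj : i ≤ (j : ℕ)) : φ t i (s t j) = φ t 0 (s t j) := by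
  induction i with
  | zero => rfl
  | succ i ih =>
    have hne : s t j ≠ s t ⟨i, hi⟩ := fun he => by
      have := congrArg Fin.val ((s t).injective he); simp at this; omega
    rw [← ih (by omega) (by omega)]
    exact h.history_succ_of_ne t ⟨i, hi⟩ _ hne

theorem history_succ_epoch (h : IsSagaPath Qg μ s w φ) (t : ℕ) {i : ℕ} (hi : i ≤ N)
    {j : Fin N} (hj : i ≤ (j : ℕ)) :
    φ (t + 1) i (s (t + 1) j) = w t ((s t)⁻¹ (s (t + 1) j) + 1) := by
  rw [h.history_apply_of_le (t + 1) hi hj, h.history_epoch,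
    ← h.history_apply_of_lt t le_rfl ((s t)⁻¹ (s (t + 1) j)).isLt, Equiv.Perm.coe_inv,
    Equiv.apply_symm_apply]

/-- Only the gradients of the history variables enter the recursion, so they, and not the history
variables themselves, are what the permutations determine. -/
theorem state_eq_of_epoch_start (h : IsSagaPath Qg μ s w φ) (h' : IsSagaPath Qg μ s' w' φ')
    {t : ℕ} (hs : s t = s' t) (hw : w t 0 = w' t 0)
    (hφ : ∀ n, Qg n (φ t 0 n) = Qg n (φ' t 0 n)) {k : ℕ} (hk : k ≤ N) :
    w t k = w' t k ∧ ∀ n, Qg n (φ t k n) = Qg n (φ' t k n) := by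
  induction k with
  | zero => exact ⟨hw, hφ⟩
  | succ k ih =>
    obtain ⟨ihw, ihφ⟩ := ih (by omega)
    have hw1 : w t (k + 1) = w' t (k + 1) := by
      rw [h.iterate_succ t ⟨k, hk⟩, h'.iterate_succ t ⟨k, hk⟩]
      simp only [ihw, ihφ, hs]
    refine ⟨hw1, fun n => ?_⟩
    by_cases hn : n = s t ⟨k, hk⟩
    · have hn' : n = s' t ⟨k, hk⟩ := hs ▸ hn
      rw [hn, h.history_succ_self t ⟨k, hk⟩, ← hn, hn', h'.history_succ_self t ⟨k, hk⟩, hw1]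
    · rw [h.history_succ_of_ne t ⟨k, hk⟩ n hn,
        h'.history_succ_of_ne t ⟨k, hk⟩ n (hs ▸ hn), ihφ]

theorem iterate_eq_of_eqOn (h : IsSagaPath Qg μ s w φ) (h' : IsSagaPath Qg μ s' w' φ')
    {t : ℕ} (hs : ∀ u ≤ t, s u = s' u) {k : ℕ} (hk : k ≤ N) : w t k = w' t k := by
  suffices ∀ t, (∀ u ≤ t, s u = s' u) → w t 0 = w' t 0 ∧ ∀ n, Qg n (φ t 0 n) = Qg n (φ' t 0 n) from
    (h.state_eq_of_epoch_start h' (hs t le_rfl) (this t hs).1 (this t hs).2 hk).1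
  intro t hs
  induction t with
  | zero => exact ⟨h.iterate_zero.trans h'.iterate_zero.symm, fun n => by
      rw [h.grad_history_zero, h'.grad_history_zero]⟩
  | succ t ih =>
    obtain ⟨hw, hφ⟩ := ih fun u hu => hs u (by omega)
    obtain ⟨hwN, hφN⟩ := h.state_eq_of_epoch_start h' (hs t (by omega)) hw hφ le_rfl
    exact ⟨by rw [h.iterate_epoch, h'.iterate_epoch, hwN], fun n => by
      rw [h.history_epoch, h'.history_epoch, hφN]⟩

theorem sum_history_succ_epoch {M : Type*} [AddCommMonoid M] (h : IsSagaPath Qg μ s w φ)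
    (t : ℕ) {i : ℕ} (hi : i ≤ N) (g : E → M) :
    ∑ n, g (φ (t + 1) i n) = ∑ j : Fin N, if (j : ℕ) < i then g (w (t + 1) (j + 1))
      else g (w t ((s t)⁻¹ (s (t + 1) j) + 1)) := by
  rw [← Equiv.sum_comp (s (t + 1))]
  refine sum_congr rfl fun j _ => ?_
  split_ifs with hj
  · rw [h.history_apply_of_lt (t + 1) hi hj]
  · rw [h.history_succ_epoch t hi (not_lt.1 hj)]

end IsSagaPath

theorem Equiv.Perm.card_smul_sum_comp_apply {ι M : Type*} [Fintype ι] [DecidableEq ι]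
    [AddCommMonoid M] (f : ι → M) (a : ι) :
    Fintype.card ι • ∑ p : Equiv.Perm ι, f (p a) = (Fintype.card ι).factorial • ∑ b, f b := by
  have hsymm : ∀ b, ∑ p : Equiv.Perm ι, f (p a) = ∑ p : Equiv.Perm ι, f (p b) := fun b =>
    Fintype.sum_equiv (Equiv.mulRight (Equiv.swap a b)) _ _ fun p => by simp
  calc Fintype.card ι • ∑ p : Equiv.Perm ι, f (p a)
      = ∑ b : ι, ∑ p : Equiv.Perm ι, f (p b) := by simp only [← hsymm, sum_const, card_univ]
    _ = ∑ p : Equiv.Perm ι, ∑ b, f (p b) := sum_comm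
    _ = ∑ _p : Equiv.Perm ι, ∑ b, f b := sum_congr rfl fun p _ => Equiv.sum_comp p f
    _ = (Fintype.card ι).factorial • ∑ b, f b := by rw [sum_const, card_univ, Fintype.card_perm]

section FiniteValued

variable {Ω α : Type*} [MeasurableSpace Ω] {P : Measure Ω} [Fintype α] [MeasurableSpace α]
  [MeasurableSingletonClass α] {X : Ω → α}

theorem integrable_comp_of_fintype [IsFiniteMeasure P] (hX : Measurable X) (h : α → ℝ) :
    Integrable (fun ω => h (X ω)) P :=
  (Integrable.of_finite (μ := P.map X)).comp_measurable hX

theorem integrable_of_factorsThrough [IsFiniteMeasure P] (hX : Measurable X) {f : Ω → ℝ}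
    (hf : Function.FactorsThrough f X) : Integrable f P := by
  obtain ⟨h, rfl⟩ := (Function.factorsThrough_iff f).1 hf
  exact integrable_comp_of_fintype hX h

theorem integral_comp_eq_sum [IsFiniteMeasure P] (hX : Measurable X) (h : α → ℝ) :
    ∫ ω, h (X ω) ∂P = ∑ x, P.real (X ⁻¹' {x}) * h x := by
  rw [← integral_map hX.aemeasurable Integrable.of_finite.aestronglyMeasurable,
    integral_fintype Integrable.of_finite]
  simp [map_measureReal_apply hX (measurableSet_singleton _)]

theorem integral_comp_perm_apply_of_indepFun [IsProbabilityMeasure P] {ι : Type*} [Fintype ι]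
    [DecidableEq ι] [MeasurableSpace (Equiv.Perm ι)] [MeasurableSingletonClass (Equiv.Perm ι)]
    {Y : Ω → Equiv.Perm ι} (hX : Measurable X) (hY : Measurable Y) (hXY : IndepFun X Y P)
    (hY_unif : ∀ p, P {ω | Y ω = p} = ((Fintype.card ι).factorial : ℝ≥0∞)⁻¹) (f : α → ι → ℝ)
    (a : ι) :
    ∫ ω, f (X ω) (Y ω a) ∂P = (Fintype.card ι : ℝ)⁻¹ * ∑ b, ∫ ω, f (X ω) b ∂P := by
  have hjoint : ∀ x p, P.real ((fun ω => (X ω, Y ω)) ⁻¹' {(x, p)}) =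
      P.real (X ⁻¹' {x}) * ((Fintype.card ι).factorial : ℝ)⁻¹ := by
    intro x p
    have hset : (fun ω => (X ω, Y ω)) ⁻¹' {(x, p)} = X ⁻¹' {x} ∩ Y ⁻¹' {p} := by
      ext ω; simp
    rw [hset, measureReal_def, hXY.measure_inter_preimage_eq_mul _ _ (measurableSet_singleton x)
      (measurableSet_singleton p), ENNReal.toReal_mul, ← measureReal_def]
    simp [Set.preimage, hY_unif p]
  calc ∫ ω, f (X ω) (Y ω a) ∂P
      = ∑ x, P.real (X ⁻¹' {x}) *
          (((Fintype.card ι).factorial : ℝ)⁻¹ * ∑ p : Equiv.Perm ι, f x (p a)) := by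
        rw [integral_comp_eq_sum (hX.prodMk hY) (fun z => f z.1 (z.2 a)), Fintype.sum_prod_type]
        simp only [hjoint, mul_sum]
        exact sum_congr rfl fun x _ => sum_congr rfl fun p _ => by ring
    _ = ∑ x, P.real (X ⁻¹' {x}) * ((Fintype.card ι : ℝ)⁻¹ * ∑ b, f x b) := by
        have hcard : (Fintype.card ι : ℝ) ≠ 0 :=
          Nat.cast_ne_zero.2 (Fintype.card_pos_iff.2 ⟨a⟩).ne'
        refine sum_congr rfl fun x _ => congrArg _ ?_
        have hperm := Equiv.Perm.card_smul_sum_comp_apply (f x) a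
        rw [nsmul_eq_mul, nsmul_eq_mul] at hperm
        field_simp
        linarith
    _ = (Fintype.card ι : ℝ)⁻¹ * ∑ b, ∫ ω, f (X ω) b ∂P := by
        simp only [mul_sum]
        rw [sum_comm]
        refine sum_congr rfl fun b _ => ?_
        rw [integral_comp_eq_sum hX (f · b), mul_sum]
        exact sum_congr rfl fun x _ => by ring

end FiniteValued

theorem Fin.sum_ite_val_lt {M : Type*} [AddCommMonoid M] {N i : ℕ} (hi : i ≤ N) (a : ℕ → M)
    (c : M) :
    ∑ j : Fin N, (if (j : ℕ) < i then a j else c) = ∑ k ∈ range i, a k + (N - i) • c := by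
  rw [Fin.sum_univ_eq_sum_range (fun k => if k < i then a k else c), sum_ite,
    show (range N).filter (· < i) = range i by ext k; simp; omega,
    show (range N).filter (¬ · < i) = Ico i N by ext k; simp; omega, Finset.sum_const,
    Nat.card_Ico]

theorem IsSagaPath.factorsThrough_past {Ω E : Type*} [AddCommGroup E] [Module ℝ E] {N : ℕ}
    {Qg : Fin N → E → E} {μ : ℝ} {σ : ℕ → Ω → Equiv.Perm (Fin N)} {w : ℕ → ℕ → Ω → E}
    {φ : ℕ → ℕ → Fin N → Ω → E} (hpath : ∀ ω, IsSagaPath Qg μ (σ · ω) (w · · ω) (φ · · · ω))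
    {t n k : ℕ} (htn : t < n) (hk : k ≤ N) :
    Function.FactorsThrough (w t k) (fun ω (u : range n) => σ u ω) :=
  fun ω ω' he => (hpath ω).iterate_eq_of_eqOn (hpath ω')
    (fun u hu => congrFun he ⟨u, mem_range.2 (by omega)⟩) hk

section SagaRR

variable {Ω E : Type*} [MeasurableSpace Ω] {P : Measure Ω} [IsProbabilityMeasure P]
  [NormedAddCommGroup E] [NormedSpace ℝ E] {N : ℕ} {Qg : Fin N → E → E} {μ : ℝ}
  {σ : ℕ → Ω → Equiv.Perm (Fin N)} {w : ℕ → ℕ → Ω → E} {φ : ℕ → ℕ → Fin N → Ω → E}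
  [MeasurableSpace (Equiv.Perm (Fin N))] [MeasurableSingletonClass (Equiv.Perm (Fin N))]

theorem integral_norm_sq_iterate_at_previous_draw
    (hpath : ∀ ω, IsSagaPath Qg μ (σ · ω) (w · · ω) (φ · · · ω))
    (hσmeas : ∀ t, Measurable (σ t))
    (hσunif : ∀ t p, P {ω | σ t ω = p} = ((N.factorial : ℝ≥0∞))⁻¹) (hσindep : iIndepFun σ P)
    (t : ℕ) (j : Fin N) :
    ∫ ω, ‖w t ((σ t ω)⁻¹ (σ (t + 1) ω j) + 1) ω‖ ^ 2 ∂P =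
      (N : ℝ)⁻¹ * ∑ k : Fin N, ∫ ω, ‖w t (k + 1) ω‖ ^ 2 ∂P := by
  set X := fun ω (u : range (t + 1)) => σ u ω
  have hX : Measurable X := measurable_pi_lambda _ fun u => hσmeas u
  choose F hF using fun k : Fin N =>
    (Function.factorsThrough_iff _).1 (IsSagaPath.factorsThrough_past hpath t.lt_succ_self k.isLt)
  have hXY : IndepFun X (σ (t + 1)) P :=
    (hσindep.indepFun_finset (range (t + 1)) {t + 1} (by simp) hσmeas).comp measurable_id
      (measurable_pi_apply (⟨t + 1, mem_singleton_self _⟩ : ({t + 1} : Finset ℕ)))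
  have havg := integral_comp_perm_apply_of_indepFun hX (hσmeas _) hXY
    (fun p => by rw [Fintype.card_fin]; exact hσunif _ p)
    (fun x k => ‖F ((x ⟨t, self_mem_range_succ t⟩)⁻¹ k) x‖ ^ 2) j
  rw [Fintype.card_fin] at havg
  calc ∫ ω, ‖w t ((σ t ω)⁻¹ (σ (t + 1) ω j) + 1) ω‖ ^ 2 ∂P
      = ∫ ω, ‖F ((σ t ω)⁻¹ (σ (t + 1) ω j)) (X ω)‖ ^ 2 ∂P := by simp only [hF]; rfl
    _ = (N : ℝ)⁻¹ * ∑ k, ∫ ω, ‖F ((σ t ω)⁻¹ k) (X ω)‖ ^ 2 ∂P := havg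
    _ = (N : ℝ)⁻¹ * ∫ ω, ∑ k, ‖F k (X ω)‖ ^ 2 ∂P := by
        rw [← integral_finsetSum _ fun k _ => integrable_comp_of_fintype hX
          (fun x => ‖F ((x ⟨t, self_mem_range_succ t⟩)⁻¹ k) x‖ ^ 2)]
        congr 1
        exact integral_congr_ae (ae_of_all _ fun ω => Equiv.sum_comp (σ t ω)⁻¹ (‖F · (X ω)‖ ^ 2))
    _ = (N : ℝ)⁻¹ * ∑ k : Fin N, ∫ ω, ‖w t (k + 1) ω‖ ^ 2 ∂P := by
        rw [integral_finsetSum _ fun k _ => integrable_comp_of_fintype hX (‖F k ·‖ ^ 2)]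
        simp only [hF]; rfl

theorem integral_sum_norm_sq_history (hpath : ∀ ω, IsSagaPath Qg μ (σ · ω) (w · · ω) (φ · · · ω))
    (hσmeas : ∀ t, Measurable (σ t))
    (hσunif : ∀ t p, P {ω | σ t ω = p} = ((N.factorial : ℝ≥0∞))⁻¹) (hσindep : iIndepFun σ P)
    (t : ℕ) {i : ℕ} (hi : i < N) :
    ∫ ω, ∑ n, ‖φ (t + 1) i n ω‖ ^ 2 ∂P =
      ∑ k ∈ range i, ∫ ω, ‖w (t + 1) (k + 1) ω‖ ^ 2 ∂P +
        ((N : ℝ) - i) / N * ∑ k ∈ range N, ∫ ω, ‖w t (k + 1) ω‖ ^ 2 ∂P := by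
  have hpast : Measurable fun ω (u : range (t + 2)) => σ u ω :=
    measurable_pi_lambda _ fun u => hσmeas u
  have hdrawn : ∀ k < N, Integrable (fun ω => ‖w (t + 1) (k + 1) ω‖ ^ 2) P := fun k hk =>
    integrable_of_factorsThrough hpast
      ((IsSagaPath.factorsThrough_past hpath (by omega) hk).comp_left (‖·‖ ^ 2))
  have hprev : ∀ j : Fin N,
      Integrable (fun ω => ‖w t ((σ t ω)⁻¹ (σ (t + 1) ω j) + 1) ω‖ ^ 2) P := fun j =>
    integrable_of_factorsThrough hpast fun ω ω' he => by
      have ht : σ t ω = σ t ω' := congrFun he ⟨t, by simp⟩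
      have ht1 : σ (t + 1) ω = σ (t + 1) ω' := congrFun he ⟨t + 1, by simp⟩
      simp only [ht, ht1]
      exact congrArg (‖·‖ ^ 2) (IsSagaPath.factorsThrough_past hpath (by omega) (Fin.isLt _) he)
  calc ∫ ω, ∑ n, ‖φ (t + 1) i n ω‖ ^ 2 ∂P
      = ∫ ω, ∑ j : Fin N, (if (j : ℕ) < i then ‖w (t + 1) (j + 1) ω‖ ^ 2
          else ‖w t ((σ t ω)⁻¹ (σ (t + 1) ω j) + 1) ω‖ ^ 2) ∂P :=
        integral_congr_ae (ae_of_all _ fun ω =>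
          (hpath ω).sum_history_succ_epoch t hi.le (‖·‖ ^ 2))
    _ = ∑ j : Fin N, (if (j : ℕ) < i then ∫ ω, ‖w (t + 1) (j + 1) ω‖ ^ 2 ∂P
          else (N : ℝ)⁻¹ * ∑ k : Fin N, ∫ ω, ‖w t (k + 1) ω‖ ^ 2 ∂P) := by
        rw [integral_finsetSum _ fun j _ => by
          by_cases hj : (j : ℕ) < i <;> simp only [hj, if_true, if_false]
          exacts [hdrawn j j.isLt, hprev j]]
        refine sum_congr rfl fun j _ => ?_
        split_ifs
        · rfl
        · exact integral_norm_sq_iterate_at_previous_draw hpath hσmeas hσunif hσindep t j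
    _ = _ := by
        rw [Fin.sum_ite_val_lt hi.le (fun k => ∫ ω, ‖w (t + 1) (k + 1) ω‖ ^ 2 ∂P), nsmul_eq_mul,
          Nat.cast_sub hi.le, Fin.sum_univ_eq_sum_range (fun k => ∫ ω, ‖w t (k + 1) ω‖ ^ 2 ∂P)]
        have hN : (N : ℝ) ≠ 0 := Nat.cast_ne_zero.2 (by omega)
        field_simp

end SagaRR

/-
`σp t ω i` is the sample index σ^t(i+1) drawn at iteration `i` of epoch `t`, `w t i ω` is w_i^t,
`φv t i n ω` is φ_{i,n}^t and `Qg n` is the gradient of Q(·; x_n).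
-/
theorem stmt_1_general
    {M N : ℕ}
    {Ω : Type} [MeasurableSpace Ω] (P : Measure Ω) [IsProbabilityMeasure P]
    (σp : ℕ → Ω → Equiv.Perm (Fin N))
    (hσmeas : ∀ t, @Measurable Ω (Equiv.Perm (Fin N)) _ ⊤ (σp t))
    (hσunif : ∀ t (π : Equiv.Perm (Fin N)),
      P {ω | σp t ω = π} = ((Nat.factorial N : ℝ≥0∞))⁻¹)
    (hσindep : iIndepFun (m := fun _ : ℕ => (⊤ : MeasurableSpace (Equiv.Perm (Fin N)))) σp P)
    (Qg : Fin N → EuclideanSpace ℝ (Fin M) → EuclideanSpace ℝ (Fin M))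
    (μ : ℝ)
    (w : ℕ → ℕ → Ω → EuclideanSpace ℝ (Fin M))
    (φv : ℕ → ℕ → Fin N → Ω → EuclideanSpace ℝ (Fin M))
    (hw00 : ∀ ω, w 0 0 ω = 0)
    (hφ00 : ∀ n ω, Qg n (φv 0 0 n ω) = 0)
    (hwrec : ∀ (t : ℕ) (i : Fin N) (ω : Ω),
      w t ((i : ℕ) + 1) ω = w t (i : ℕ) ω - μ •
        (Qg (σp t ω i) (w t (i : ℕ) ω) - Qg (σp t ω i) (φv t (i : ℕ) (σp t ω i) ω)
          + (N : ℝ)⁻¹ • ∑ m, Qg m (φv t (i : ℕ) m ω)))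
    (hφrec1 : ∀ (t : ℕ) (i : Fin N) (ω : Ω),
      φv t ((i : ℕ) + 1) (σp t ω i) ω = w t ((i : ℕ) + 1) ω)
    (hφrec2 : ∀ (t : ℕ) (i : Fin N) (m : Fin N) (ω : Ω), m ≠ σp t ω i →
      φv t ((i : ℕ) + 1) m ω = φv t (i : ℕ) m ω)
    (hwepoch : ∀ (t : ℕ) (ω : Ω), w (t + 1) 0 ω = w t N ω)
    (hφepoch : ∀ (t : ℕ) (m : Fin N) (ω : Ω), φv (t + 1) 0 m ω = φv t N m ω)
    :
    -- Second-order moment of the history variables.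
    ∀ t : ℕ, 1 ≤ t → ∀ i : ℕ, i < N →
      ∫ ω, (∑ n, ‖φv t i n ω‖ ^ 2) ∂P =
        (∑ k ∈ Finset.range i, ∫ ω, ‖w t (k + 1) ω‖ ^ 2 ∂P) +
          (((N : ℝ) - i) / N) * ∑ k ∈ Finset.range N, ∫ ω, ‖w (t - 1) (k + 1) ω‖ ^ 2 ∂P := by
  intro t ht i hi
  obtain ⟨T, rfl⟩ : ∃ T, t = T + 1 := ⟨t - 1, by omega⟩
  let : MeasurableSpace (Equiv.Perm (Fin N)) := ⊤
  rw [Nat.add_sub_cancel]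
  exact integral_sum_norm_sq_history (fun ω => ⟨hw00 ω, (hφ00 · ω), (hwrec · · ω), (hφrec1 · · ω),
    (hφrec2 · · · ω), (hwepoch · ω), (hφepoch · · ω)⟩) hσmeas hσunif hσindep T hi

theorem stmt_1
    {M N : ℕ} (hM : 1 ≤ M) (hN : 1 ≤ N)
    {Ω : Type} [MeasurableSpace Ω] (P : Measure Ω) [IsProbabilityMeasure P]
    (σp : ℕ → Ω → Equiv.Perm (Fin N))
    (hσmeas : ∀ t, @Measurable Ω (Equiv.Perm (Fin N)) _ ⊤ (σp t))
    (hσunif : ∀ t (π : Equiv.Perm (Fin N)),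
      P {ω | σp t ω = π} = ((Nat.factorial N : ℝ≥0∞))⁻¹)
    (hσindep : iIndepFun (m := fun _ : ℕ => (⊤ : MeasurableSpace (Equiv.Perm (Fin N)))) σp P)
    (Q : Fin N → EuclideanSpace ℝ (Fin M) → ℝ)
    (Qg : Fin N → EuclideanSpace ℝ (Fin M) → EuclideanSpace ℝ (Fin M))
    (δ ν : ℝ) (hδ : 0 < δ) (hν : 0 < ν)
    (hQdiff : ∀ n x, HasGradientAt (Q n) (Qg n x) x)
    (hQconv : ∀ n, ConvexOn ℝ Set.univ (Q n))
    (hLip : ∀ n x y, ‖Qg n x - Qg n y‖ ≤ δ * ‖x - y‖)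
    (hSC : ∀ x y : EuclideanSpace ℝ (Fin M),
      ν * ‖x - y‖ ^ 2 ≤ ⟪((N : ℝ)⁻¹ • ∑ n, Qg n x) - ((N : ℝ)⁻¹ • ∑ n, Qg n y), x - y⟫)
    (wstar : EuclideanSpace ℝ (Fin M))
    (hstar : ∑ n, Qg n wstar = 0)
    (μ : ℝ) (hμpos : 0 < μ)
    (w : ℕ → ℕ → Ω → EuclideanSpace ℝ (Fin M))
    (φv : ℕ → ℕ → Fin N → Ω → EuclideanSpace ℝ (Fin M))
    (hw00 : ∀ ω, w 0 0 ω = 0)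
    (hφ00 : ∀ n ω, Qg n (φv 0 0 n ω) = 0)
    (hwrec : ∀ (t : ℕ) (i : Fin N) (ω : Ω),
      w t ((i : ℕ) + 1) ω = w t (i : ℕ) ω - μ •
        (Qg (σp t ω i) (w t (i : ℕ) ω) - Qg (σp t ω i) (φv t (i : ℕ) (σp t ω i) ω)
          + (N : ℝ)⁻¹ • ∑ m, Qg m (φv t (i : ℕ) m ω)))
    (hφrec1 : ∀ (t : ℕ) (i : Fin N) (ω : Ω),
      φv t ((i : ℕ) + 1) (σp t ω i) ω = w t ((i : ℕ) + 1) ω)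
    (hφrec2 : ∀ (t : ℕ) (i : Fin N) (m : Fin N) (ω : Ω), m ≠ σp t ω i →
      φv t ((i : ℕ) + 1) m ω = φv t (i : ℕ) m ω)
    (hwepoch : ∀ (t : ℕ) (ω : Ω), w (t + 1) 0 ω = w t N ω)
    (hφepoch : ∀ (t : ℕ) (m : Fin N) (ω : Ω), φv (t + 1) 0 m ω = φv t N m ω)
    :
    -- Second-order moment of the history variables.
    ∀ t : ℕ, 1 ≤ t → ∀ i : ℕ, i < N →
      ∫ ω, (∑ n, ‖φv t i n ω‖ ^ 2) ∂P =
        (∑ k ∈ Finset.range i, ∫ ω, ‖w t (k + 1) ω‖ ^ 2 ∂P) +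
          (((N : ℝ) - i) / N) * ∑ k ∈ Finset.range N, ∫ ω, ‖w (t - 1) (k + 1) ω‖ ^ 2 ∂P :=
  stmt_1_general P σp hσmeas hσunif hσindep Qg μ w φv hw00 hφ00 hwrec hφrec1 hφrec2 hwepoch hφepoch
end

section
/- For SAGA-RR with step size μ > 0, the forward inner difference in epoch t ≥ 1 satisfies Σ_{i=1}^{N−1} E‖w_i^t − w_0^t‖² ≤ 5δ²μ²N² ( Σ_{i=1}^{N−1} E‖w_i^t − w_0^t‖² + Σ_{i=1}^{N−1} E‖w_N^{t−1} − w_i^{t−1}‖² ) + 3δ²μ²N³ E‖w̃_0^t‖². -/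
open MeasureTheory ProbabilityTheory Finset
open scoped RealInnerProductSpace ENNReal

/-!
The inequality already holds pointwise in ω, for every choice of the permutations; expectations
are taken only at the end, the iterates being in L² because each is obtained from the initial
data by Lipschitz maps and finitely many measurable index choices.

Within an epoch, w_i − w_0 = −μ Σ_{j<i} g_j for the SAGA directions g_j, so
‖w_i − w_0‖² ≤ μ² i Σ_j ‖g_j‖², and Σ_{i<N} i ≤ N²/2. Anchoring every gradient in g_j at w_0
and using Σ_n ∇Q(w⋆; x_n) = 0 writes g_j as four δ-Lipschitz differences, whence
Σ_j ‖g_j‖² ≤ 4δ² (2 Σ_i ‖w_i − w_0‖² + 2 Σ_n ‖φ_{0,n} − w_0‖² + N ‖w̃_0‖²): a history variable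
is either an iterate w_k of the current epoch or still its value at the start of the epoch. At
that start the history consists of the iterates w_1^{t−1}, …, w_N^{t−1} of the previous epoch
and w_0^t = w_N^{t−1}, which turns the middle sum into the backward difference of epoch t − 1.
-/

theorem history_eq_ite {N : ℕ} {α : Type*} (σ : Equiv.Perm (Fin N)) (a : ℕ → α)
    (φ : ℕ → Fin N → α) (h1 : ∀ i : Fin N, φ ((i : ℕ) + 1) (σ i) = a ((i : ℕ) + 1))
    (h2 : ∀ (i m : Fin N), m ≠ σ i → φ ((i : ℕ) + 1) m = φ i m) {j : ℕ} (hj : j ≤ N)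
    (m : Fin N) : φ j m = if (σ.symm m : ℕ) < j then a ((σ.symm m : ℕ) + 1) else φ 0 m := by
  induction j with
  | zero => simp
  | succ k ih =>
    have hk : k < N := hj
    by_cases hm : m = σ ⟨k, hk⟩
    · subst hm
      simpa using h1 ⟨k, hk⟩
    · have hne : (σ.symm m : ℕ) ≠ k := fun h =>
        hm (by rw [← Fin.ext (b := ⟨k, hk⟩) h, Equiv.apply_symm_apply])
      rw [h2 ⟨k, hk⟩ m hm, ih hk.le]
      split_ifs <;> first | rfl | omega

section Epoch

variable {N : ℕ} {E : Type*} [NormedAddCommGroup E]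

theorem sum_norm_history_sub_sq_le (σ : Equiv.Perm (Fin N)) (a : ℕ → E) (φ : ℕ → Fin N → E)
    (h1 : ∀ i : Fin N, φ ((i : ℕ) + 1) (σ i) = a ((i : ℕ) + 1))
    (h2 : ∀ (i m : Fin N), m ≠ σ i → φ ((i : ℕ) + 1) m = φ i m) (u : E) {j : ℕ} (hj : j ≤ N) :
    ∑ m, ‖φ j m - u‖ ^ 2 ≤ ∑ i ∈ Ico 1 (j + 1), ‖a i - u‖ ^ 2 + ∑ m, ‖φ 0 m - u‖ ^ 2 := by
  induction j with
  | zero => simp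
  | succ k ih =>
    have hk : k < N := hj
    have hupd : ∀ m, ‖φ (k + 1) m - u‖ ^ 2 ≤
        (if m = σ ⟨k, hk⟩ then ‖a (k + 1) - u‖ ^ 2 else 0) + ‖φ k m - u‖ ^ 2 := by
      intro m
      by_cases hm : m = σ ⟨k, hk⟩
      · subst hm
        simp [h1 ⟨k, hk⟩]
      · simp [hm, h2 ⟨k, hk⟩ m hm]
    calc ∑ m, ‖φ (k + 1) m - u‖ ^ 2
        ≤ ∑ m, ((if m = σ ⟨k, hk⟩ then ‖a (k + 1) - u‖ ^ 2 else 0) + ‖φ k m - u‖ ^ 2) :=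
          sum_le_sum fun m _ => hupd m
      _ = ‖a (k + 1) - u‖ ^ 2 + ∑ m, ‖φ k m - u‖ ^ 2 := by
          rw [sum_add_distrib, sum_ite_eq']
          simp
      _ ≤ ‖a (k + 1) - u‖ ^ 2 + (∑ i ∈ Ico 1 (k + 1), ‖a i - u‖ ^ 2 + ∑ m, ‖φ 0 m - u‖ ^ 2) := by
          gcongr
          exact ih hk.le
      _ = ∑ i ∈ Ico 1 (k + 1 + 1), ‖a i - u‖ ^ 2 + ∑ m, ‖φ 0 m - u‖ ^ 2 := by
          rw [sum_Ico_succ_top (by omega : 1 ≤ k + 1)]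
          ring

theorem sum_norm_history_end_sub_sq (σ : Equiv.Perm (Fin N)) (a : ℕ → E) (φ : ℕ → Fin N → E)
    (h1 : ∀ i : Fin N, φ ((i : ℕ) + 1) (σ i) = a ((i : ℕ) + 1))
    (h2 : ∀ (i m : Fin N), m ≠ σ i → φ ((i : ℕ) + 1) m = φ i m) :
    ∑ m, ‖φ N m - a N‖ ^ 2 = ∑ i ∈ Ico 1 N, ‖a N - a i‖ ^ 2 := by
  have hφN : ∀ m, φ N m = a ((σ.symm m : ℕ) + 1) := fun m => by
    rw [history_eq_ite σ a φ h1 h2 le_rfl, if_pos (σ.symm m).is_lt]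
  simp_rw [hφN, norm_sub_rev _ (a N)]
  rw [Equiv.sum_comp σ.symm (fun k : Fin N => ‖a N - a ((k : ℕ) + 1)‖ ^ 2),
    Fin.sum_univ_eq_sum_range (fun k => ‖a N - a (k + 1)‖ ^ 2)]
  have hshift := sum_Ico_eq_sum_range (fun i => ‖a N - a i‖ ^ 2) 1 (N + 1)
  simp only [Nat.add_sub_cancel, add_comm 1] at hshift
  rw [← hshift]
  refine (sum_subset (Ico_subset_Ico_right N.le_succ) fun i hi hi' => ?_).symm
  obtain rfl : i = N := by simp only [mem_Ico] at hi hi'; omega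
  simp

theorem norm_add₄_sq_le (a b c d : E) :
    ‖a + b + c + d‖ ^ 2 ≤ 4 * (‖a‖ ^ 2 + ‖b‖ ^ 2 + ‖c‖ ^ 2 + ‖d‖ ^ 2) := by
  have h := pow_le_pow_left₀ (norm_nonneg _) (norm_add₄_le (a := a) (b := b) (c := c) (d := d)) 2
  nlinarith [sq_nonneg (‖a‖ - ‖b‖), sq_nonneg (‖a‖ - ‖c‖), sq_nonneg (‖a‖ - ‖d‖),
    sq_nonneg (‖b‖ - ‖c‖), sq_nonneg (‖b‖ - ‖d‖), sq_nonneg (‖c‖ - ‖d‖)]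

variable [NormedSpace ℝ E]

theorem norm_inv_card_smul_sum_sq_le {ι : Type*} (s : Finset ι) (v : ι → E) :
    ‖(#s : ℝ)⁻¹ • ∑ i ∈ s, v i‖ ^ 2 ≤ (#s : ℝ)⁻¹ * ∑ i ∈ s, ‖v i‖ ^ 2 := by
  rcases s.eq_empty_or_nonempty with rfl | hs
  · simp
  have hcard : (0 : ℝ) < #s := by exact_mod_cast hs.card_pos
  calc ‖(#s : ℝ)⁻¹ • ∑ i ∈ s, v i‖ ^ 2 = (#s : ℝ)⁻¹ ^ 2 * ‖∑ i ∈ s, v i‖ ^ 2 := by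
        rw [norm_smul, mul_pow, Real.norm_eq_abs, sq_abs]
    _ ≤ (#s : ℝ)⁻¹ ^ 2 * (∑ i ∈ s, ‖v i‖) ^ 2 := by gcongr; exact norm_sum_le _ _
    _ ≤ (#s : ℝ)⁻¹ ^ 2 * (#s * ∑ i ∈ s, ‖v i‖ ^ 2) := by gcongr; exact sq_sum_le_card_mul_sum_sq
    _ = (#s : ℝ)⁻¹ * ∑ i ∈ s, ‖v i‖ ^ 2 := by field_simp

theorem norm_sub_sq_le_mul_sum_of_step {a g : ℕ → E} {μ : ℝ} {i : ℕ}
    (h : ∀ j < i, a (j + 1) = a j - μ • g j) :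
    ‖a i - a 0‖ ^ 2 ≤ μ ^ 2 * i * ∑ j ∈ range i, ‖g j‖ ^ 2 := by
  have htel : a i - a 0 = -(μ • ∑ j ∈ range i, g j) := by
    induction i with
    | zero => simp
    | succ k ih =>
      rw [h k k.lt_succ_self, sub_right_comm, ih fun j hj => h j (hj.trans k.lt_succ_self),
        sum_range_succ, smul_add, neg_add, sub_eq_add_neg]
  calc ‖a i - a 0‖ ^ 2 = μ ^ 2 * ‖∑ j ∈ range i, g j‖ ^ 2 := by
        rw [htel, norm_neg, norm_smul, mul_pow, Real.norm_eq_abs, sq_abs]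
    _ ≤ μ ^ 2 * (∑ j ∈ range i, ‖g j‖) ^ 2 := by gcongr; exact norm_sum_le _ _
    _ ≤ μ ^ 2 * (i * ∑ j ∈ range i, ‖g j‖ ^ 2) := by
        gcongr; simpa using sq_sum_le_card_mul_sum_sq (s := range i) (f := fun j => ‖g j‖)
    _ = μ ^ 2 * i * ∑ j ∈ range i, ‖g j‖ ^ 2 := by ring

theorem sum_range_cast_le (n : ℕ) : ∑ i ∈ range n, (i : ℝ) ≤ n ^ 2 / 2 := by
  induction n with
  | zero => simp
  | succ k ih =>
    rw [sum_range_succ]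
    push_cast
    nlinarith

theorem norm_sub_add_mean_sq_le {Qg : Fin N → E → E} {δ : ℝ}
    (hLip : ∀ n x y, ‖Qg n x - Qg n y‖ ≤ δ * ‖x - y‖) {wstar : E} (hstar : ∑ n, Qg n wstar = 0)
    (n : Fin N) (x y u : E) (z : Fin N → E) :
    ‖Qg n x - Qg n y + (N : ℝ)⁻¹ • ∑ m, Qg m (z m)‖ ^ 2 ≤
      4 * δ ^ 2 * (‖x - u‖ ^ 2 + ‖y - u‖ ^ 2 + (N : ℝ)⁻¹ * ∑ m, ‖z m - u‖ ^ 2 +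
        ‖wstar - u‖ ^ 2) := by
  have hsq : ∀ n x y, ‖Qg n x - Qg n y‖ ^ 2 ≤ δ ^ 2 * ‖x - y‖ ^ 2 := fun n x y => by
    rw [← mul_pow]; exact pow_le_pow_left₀ (norm_nonneg _) (hLip n x y) 2
  have hmean : ∀ v : Fin N → E, ‖(N : ℝ)⁻¹ • ∑ m, v m‖ ^ 2 ≤ (N : ℝ)⁻¹ * ∑ m, ‖v m‖ ^ 2 := by
    simpa using norm_inv_card_smul_sum_sq_le (univ : Finset (Fin N))
  -- anchor every gradient at `u`, and compare the mean gradient at `u` with the one at `wstar`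
  have hsplit : Qg n x - Qg n y + (N : ℝ)⁻¹ • ∑ m, Qg m (z m) =
      (Qg n x - Qg n u) + (Qg n u - Qg n y) + (N : ℝ)⁻¹ • ∑ m, (Qg m (z m) - Qg m u) +
        (N : ℝ)⁻¹ • ∑ m, (Qg m u - Qg m wstar) := by
    simp only [sum_sub_distrib, hstar, smul_sub, sub_zero]
    abel
  have hC : ‖(N : ℝ)⁻¹ • ∑ m, (Qg m (z m) - Qg m u)‖ ^ 2 ≤
      δ ^ 2 * ((N : ℝ)⁻¹ * ∑ m, ‖z m - u‖ ^ 2) := by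
    calc _ ≤ (N : ℝ)⁻¹ * ∑ m, δ ^ 2 * ‖z m - u‖ ^ 2 := by
          refine (hmean _).trans ?_
          gcongr with m
          exact hsq m _ _
      _ = δ ^ 2 * ((N : ℝ)⁻¹ * ∑ m, ‖z m - u‖ ^ 2) := by rw [← mul_sum]; ring
  have hD : ‖(N : ℝ)⁻¹ • ∑ m, (Qg m u - Qg m wstar)‖ ^ 2 ≤ δ ^ 2 * ‖wstar - u‖ ^ 2 := by
    have hN : (N : ℝ)⁻¹ * N = 1 := inv_mul_cancel₀ (by exact_mod_cast n.pos.ne')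
    calc _ ≤ (N : ℝ)⁻¹ * ∑ _m : Fin N, δ ^ 2 * ‖wstar - u‖ ^ 2 := by
          refine (hmean _).trans ?_
          gcongr with m
          rw [norm_sub_rev wstar]
          exact hsq m _ _
      _ = δ ^ 2 * ‖wstar - u‖ ^ 2 := by simp [← mul_assoc, hN]
  have hA := hsq n x u
  have hB := hsq n u y
  rw [norm_sub_rev u y] at hB
  rw [hsplit]
  refine (norm_add₄_sq_le _ _ _ _).trans ?_
  linarith

noncomputable def sagaDirection (Qg : Fin N → E → E) (σ : Equiv.Perm (Fin N)) (a : ℕ → E)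
    (φ : ℕ → Fin N → E) (i : Fin N) : E :=
  Qg (σ i) (a i) - Qg (σ i) (φ i (σ i)) + (N : ℝ)⁻¹ • ∑ m, Qg m (φ i m)

theorem sum_norm_sagaDirection_sq_le {Qg : Fin N → E → E} {δ : ℝ}
    (hLip : ∀ n x y, ‖Qg n x - Qg n y‖ ≤ δ * ‖x - y‖) {wstar : E} (hstar : ∑ n, Qg n wstar = 0)
    (σ : Equiv.Perm (Fin N)) (a : ℕ → E) (φ : ℕ → Fin N → E)
    (h1 : ∀ i : Fin N, φ ((i : ℕ) + 1) (σ i) = a ((i : ℕ) + 1))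
    (h2 : ∀ (i m : Fin N), m ≠ σ i → φ ((i : ℕ) + 1) m = φ i m) :
    ∑ j, ‖sagaDirection Qg σ a φ j‖ ^ 2 ≤
      4 * δ ^ 2 * (2 * ∑ i ∈ Ico 1 N, ‖a i - a 0‖ ^ 2 + 2 * ∑ m, ‖φ 0 m - a 0‖ ^ 2 +
        N * ‖wstar - a 0‖ ^ 2) := by
  set S := ∑ i ∈ Ico 1 N, ‖a i - a 0‖ ^ 2
  set H := ∑ m, ‖φ 0 m - a 0‖ ^ 2
  set V := ‖wstar - a 0‖ ^ 2
  have hdir : ∀ j : Fin N, ‖sagaDirection Qg σ a φ j‖ ^ 2 ≤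
      4 * δ ^ 2 * (‖a j - a 0‖ ^ 2 + ‖φ 0 (σ j) - a 0‖ ^ 2 + (N : ℝ)⁻¹ * (S + H) + V) := by
    intro j
    have hφj : φ j (σ j) = φ 0 (σ j) := by simp [history_eq_ite σ a φ h1 h2 j.is_lt.le]
    have hhist : ∑ m, ‖φ j m - a 0‖ ^ 2 ≤ S + H :=
      (sum_norm_history_sub_sq_le σ a φ h1 h2 (a 0) j.is_lt.le).trans <| by
        gcongr
        exact sum_le_sum_of_subset_of_nonneg (Ico_subset_Ico_right j.is_lt)
          fun _ _ _ => sq_nonneg _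
    refine (norm_sub_add_mean_sq_le hLip hstar (σ j) (a j) (φ j (σ j)) (a 0) (φ j)).trans ?_
    rw [hφj]
    gcongr
  have hA : ∑ j : Fin N, ‖a j - a 0‖ ^ 2 = S := by
    rw [Fin.sum_univ_eq_sum_range (fun j => ‖a j - a 0‖ ^ 2), range_eq_Ico]
    refine (sum_subset (Ico_subset_Ico_left zero_le_one) fun i hi hi' => ?_).symm
    obtain rfl : i = 0 := by simp only [mem_Ico] at hi hi'; omega
    simp
  have hB : ∑ j : Fin N, ‖φ 0 (σ j) - a 0‖ ^ 2 = H :=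
    Equiv.sum_comp σ fun m => ‖φ 0 m - a 0‖ ^ 2
  have hSH : (N : ℝ) * ((N : ℝ)⁻¹ * (S + H)) ≤ S + H := by
    rw [← mul_assoc]
    exact mul_le_of_le_one_left (by positivity) mul_inv_le_one
  calc ∑ j, ‖sagaDirection Qg σ a φ j‖ ^ 2
      ≤ ∑ j : Fin N,
          4 * δ ^ 2 * (‖a j - a 0‖ ^ 2 + ‖φ 0 (σ j) - a 0‖ ^ 2 + (N : ℝ)⁻¹ * (S + H) + V) :=
        sum_le_sum fun j _ => hdir j
    _ = 4 * δ ^ 2 * (S + H + N * ((N : ℝ)⁻¹ * (S + H)) + N * V) := by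
        simp only [← mul_sum, sum_add_distrib, sum_const, card_univ, Fintype.card_fin,
          nsmul_eq_mul, hA, hB]
        ring
    _ ≤ 4 * δ ^ 2 * (2 * S + 2 * H + N * V) := by gcongr 4 * δ ^ 2 * ?_; linarith

theorem saga_epoch_forward_diff_le {Qg : Fin N → E → E} {δ : ℝ}
    (hLip : ∀ n x y, ‖Qg n x - Qg n y‖ ≤ δ * ‖x - y‖) {wstar : E} (hstar : ∑ n, Qg n wstar = 0)
    (μ : ℝ) (σ : Equiv.Perm (Fin N)) (a : ℕ → E) (φ : ℕ → Fin N → E)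
    (hstep : ∀ i : Fin N, a ((i : ℕ) + 1) = a i - μ • sagaDirection Qg σ a φ i)
    (h1 : ∀ i : Fin N, φ ((i : ℕ) + 1) (σ i) = a ((i : ℕ) + 1))
    (h2 : ∀ (i m : Fin N), m ≠ σ i → φ ((i : ℕ) + 1) m = φ i m) :
    ∑ i ∈ Ico 1 N, ‖a i - a 0‖ ^ 2 ≤
      4 * δ ^ 2 * μ ^ 2 * N ^ 2 * (∑ i ∈ Ico 1 N, ‖a i - a 0‖ ^ 2 + ∑ m, ‖φ 0 m - a 0‖ ^ 2) +
        2 * δ ^ 2 * μ ^ 2 * N ^ 3 * ‖wstar - a 0‖ ^ 2 := by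
  set S := ∑ i ∈ Ico 1 N, ‖a i - a 0‖ ^ 2
  set g : ℕ → E := fun j => if h : j < N then sagaDirection Qg σ a φ ⟨j, h⟩ else 0
  have hg : ∀ j < N, a (j + 1) = a j - μ • g j := fun j hj => by
    simpa only [g, dif_pos hj] using hstep ⟨j, hj⟩
  set T := ∑ j ∈ range N, ‖g j‖ ^ 2
  have hT : T = ∑ j, ‖sagaDirection Qg σ a φ j‖ ^ 2 :=
    (Fin.sum_univ_eq_sum_range (fun j => ‖g j‖ ^ 2) N).symm.trans (by simp [g])
  have hdrift : ∀ i ∈ Ico 1 N, ‖a i - a 0‖ ^ 2 ≤ μ ^ 2 * i * T := fun i hi =>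
    (norm_sub_sq_le_mul_sum_of_step fun j hj => hg j (hj.trans (mem_Ico.1 hi).2)).trans <| by
      gcongr
      exact sum_le_sum_of_subset_of_nonneg (range_subset_range.2 (mem_Ico.1 hi).2.le)
        fun _ _ _ => sq_nonneg _
  have hgauss : ∑ i ∈ Ico 1 N, (i : ℝ) ≤ N ^ 2 / 2 :=
    (sum_le_sum_of_subset_of_nonneg (range_eq_Ico N ▸ Ico_subset_Ico_left zero_le_one)
      fun _ _ _ => by positivity).trans (sum_range_cast_le N)
  calc S ≤ ∑ i ∈ Ico 1 N, μ ^ 2 * i * T := sum_le_sum hdrift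
    _ = μ ^ 2 * T * ∑ i ∈ Ico 1 N, (i : ℝ) := by
        rw [mul_sum]
        exact sum_congr rfl fun i _ => by ring
    _ ≤ μ ^ 2 * (4 * δ ^ 2 * (2 * S + 2 * ∑ m, ‖φ 0 m - a 0‖ ^ 2 + N * ‖wstar - a 0‖ ^ 2)) *
        (N ^ 2 / 2) := by
        rw [hT]
        gcongr
        exact sum_norm_sagaDirection_sq_le hLip hstar σ a φ h1 h2
    _ = _ := by ring

end Epoch

section Integrability

variable {Ω E : Type*} [MeasurableSpace Ω] {P : Measure Ω} [NormedAddCommGroup E] {p : ℝ≥0∞}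

theorem memLp_of_finite_index {ι : Type*} [Fintype ι] {σ : Ω → ι}
    (hσ : ∀ i, MeasurableSet {ω | σ ω = i}) {f : ι → Ω → E} (hf : ∀ i, MemLp (f i) p P) :
    MemLp (fun ω => f (σ ω) ω) p P := by
  classical
  have hsum : (fun ω => f (σ ω) ω) = fun ω => ∑ i, {ω | σ ω = i}.indicator (f i) ω := by
    funext ω
    rw [sum_eq_single (σ ω) (fun i _ hi => by simp [Ne.symm hi]) (by simp)]
    simp
  rw [hsum]
  exact memLp_finsetSum _ fun i _ => (hf i).indicator (hσ i)

theorem MeasureTheory.MemLp.comp_lipschitzWith [IsFiniteMeasure P] {F : Type*}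
    [NormedAddCommGroup F] {g : E → F} {K : NNReal} (hg : LipschitzWith K g) {x : Ω → E}
    (hx : MemLp x p P) :
    MemLp (fun ω => g (x ω)) p P := by
  have hg0 : LipschitzWith K fun y => g y - g 0 :=
    LipschitzWith.of_dist_le_mul fun y z => by simpa [dist_eq_norm] using hg.dist_le_mul y z
  convert (hg0.comp_memLp (by simp) hx).add (memLp_const (g 0)) using 1
  funext ω
  simp

theorem integrable_norm_sub_sq {x y : Ω → E} (hx : MemLp x 2 P) (hy : MemLp y 2 P) :
    Integrable (fun ω => ‖x ω - y ω‖ ^ 2) P :=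
  (memLp_two_iff_integrable_sq_norm (hx.sub hy).1).1 (hx.sub hy)

theorem sum_integral_le_of_forall {ι : Type*} (s : Finset ι) {f g : ι → Ω → ℝ} {h : Ω → ℝ}
    (c d : ℝ) (hf : ∀ i ∈ s, Integrable (f i) P) (hg : ∀ i ∈ s, Integrable (g i) P)
    (hh : Integrable h P)
    (hle : ∀ ω, ∑ i ∈ s, f i ω ≤ c * (∑ i ∈ s, f i ω + ∑ i ∈ s, g i ω) + d * h ω) :
    ∑ i ∈ s, ∫ ω, f i ω ∂P ≤
      c * (∑ i ∈ s, ∫ ω, f i ω ∂P + ∑ i ∈ s, ∫ ω, g i ω ∂P) + d * ∫ ω, h ω ∂P := by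
  have hF := integrable_finsetSum s hf
  have hG := integrable_finsetSum s hg
  have hFG : Integrable (fun ω => c * (∑ i ∈ s, f i ω + ∑ i ∈ s, g i ω)) P :=
    (hF.add hG).const_mul c
  calc ∑ i ∈ s, ∫ ω, f i ω ∂P = ∫ ω, ∑ i ∈ s, f i ω ∂P := (integral_finsetSum s hf).symm
    _ ≤ ∫ ω, (c * (∑ i ∈ s, f i ω + ∑ i ∈ s, g i ω) + d * h ω) ∂P :=
        integral_mono hF (hFG.add (hh.const_mul d)) hle
    _ = _ := by
        rw [integral_add hFG (hh.const_mul d), integral_const_mul, integral_const_mul,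
          integral_add hF hG, integral_finsetSum s hf, integral_finsetSum s hg]

variable [IsFiniteMeasure P] [NormedSpace ℝ E] {N : ℕ} {Qg : Fin N → E → E} {K : NNReal}
  {μ : ℝ}

theorem memLp_saga_epoch {σ : Ω → Equiv.Perm (Fin N)}
    (hσ : ∀ i m, MeasurableSet {ω | σ ω i = m}) (hLip : ∀ n, LipschitzWith K (Qg n))
    {a : ℕ → Ω → E} {φ : ℕ → Fin N → Ω → E}
    (hstep : ∀ (i : Fin N) ω,
      a ((i : ℕ) + 1) ω = a i ω - μ • sagaDirection Qg (σ ω) (a · ω) (φ · · ω) i)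
    (h1 : ∀ (i : Fin N) ω, φ ((i : ℕ) + 1) (σ ω i) ω = a ((i : ℕ) + 1) ω)
    (h2 : ∀ (i m : Fin N) ω, m ≠ σ ω i → φ ((i : ℕ) + 1) m ω = φ i m ω)
    (ha0 : MemLp (a 0) p P) (hφ0 : ∀ m, MemLp (fun ω => Qg m (φ 0 m ω)) p P)
    {i : ℕ} (hi : i ≤ N) :
    MemLp (a i) p P ∧ ∀ m, MemLp (fun ω => Qg m (φ i m ω)) p P := by
  induction i with
  | zero => exact ⟨ha0, hφ0⟩
  | succ i ih =>
    obtain ⟨ha, hφ⟩ := ih (by omega)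
    have hsel := hσ ⟨i, hi⟩
    have ha' : MemLp (a (i + 1)) p P := by
      have hA : MemLp (fun ω => Qg (σ ω ⟨i, hi⟩) (a i ω)) p P :=
        memLp_of_finite_index hsel (f := fun n ω => Qg n (a i ω))
          fun n => ha.comp_lipschitzWith (hLip n)
      have hB : MemLp (fun ω => Qg (σ ω ⟨i, hi⟩) (φ i (σ ω ⟨i, hi⟩) ω)) p P :=
        memLp_of_finite_index hsel (f := fun n ω => Qg n (φ i n ω)) hφ
      have hC : MemLp (fun ω => (N : ℝ)⁻¹ • ∑ m, Qg m (φ i m ω)) p P :=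
        (memLp_finsetSum univ fun m _ => hφ m).const_smul _
      rw [funext (hstep ⟨i, hi⟩)]
      exact ha.sub (((hA.sub hB).add hC).const_smul μ)
    refine ⟨ha', fun m => ?_⟩
    have hupd : (fun ω => Qg m (φ (i + 1) m ω)) = fun ω =>
        if σ ω ⟨i, hi⟩ = m then Qg m (a (i + 1) ω) else Qg m (φ i m ω) := by
      funext ω
      split_ifs with hm
      · rw [← hm, h1 ⟨i, hi⟩ ω]
      · rw [h2 ⟨i, hi⟩ m ω (Ne.symm hm)]
    rw [hupd]
    exact memLp_of_finite_index hsel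
      (f := fun n ω => if n = m then Qg m (a (i + 1) ω) else Qg m (φ i m ω))
      fun n => by split_ifs; exacts [ha'.comp_lipschitzWith (hLip m), hφ m]

theorem memLp_saga_iterates {σp : ℕ → Ω → Equiv.Perm (Fin N)}
    (hσ : ∀ t i m, MeasurableSet {ω | σp t ω i = m}) (hLip : ∀ n, LipschitzWith K (Qg n))
    {w : ℕ → ℕ → Ω → E} {φv : ℕ → ℕ → Fin N → Ω → E}
    (hwrec : ∀ t (i : Fin N) ω,
      w t ((i : ℕ) + 1) ω = w t i ω - μ • sagaDirection Qg (σp t ω) (w t · ω) (φv t · · ω) i)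
    (hφrec1 : ∀ t (i : Fin N) ω, φv t ((i : ℕ) + 1) (σp t ω i) ω = w t ((i : ℕ) + 1) ω)
    (hφrec2 : ∀ t (i m : Fin N) ω, m ≠ σp t ω i → φv t ((i : ℕ) + 1) m ω = φv t i m ω)
    (hwepoch : ∀ t ω, w (t + 1) 0 ω = w t N ω)
    (hφepoch : ∀ t m ω, φv (t + 1) 0 m ω = φv t N m ω)
    (hw00 : MemLp (w 0 0) p P) (hφ00 : ∀ m, MemLp (fun ω => Qg m (φv 0 0 m ω)) p P)
    (t : ℕ) {i : ℕ} (hi : i ≤ N) :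
    MemLp (w t i) p P ∧ ∀ m, MemLp (fun ω => Qg m (φv t i m ω)) p P := by
  induction t generalizing i with
  | zero => exact memLp_saga_epoch (hσ 0) hLip (hwrec 0) (hφrec1 0) (hφrec2 0) hw00 hφ00 hi
  | succ t ih =>
    obtain ⟨hw, hφ⟩ := ih le_rfl
    refine memLp_saga_epoch (hσ (t + 1)) hLip (hwrec (t + 1)) (hφrec1 (t + 1)) (hφrec2 (t + 1))
      (funext (hwepoch t) ▸ hw) (fun m => ?_) hi
    simpa only [hφepoch] using hφ m

end Integrability

/-
`σp t` is the random permutation of epoch `t`, 0-based: `σp t ω i` is the sample index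
σ^t(i+1) selected at iteration `i` of epoch `t`; `w t i ω` is the iterate w_i^t and
`φv t i n ω` the history variable φ_{i,n}^t. `Qg n` is the gradient of w ↦ Q(w; x_n), and
`wstar` the minimizer of J.
-/
theorem stmt_3_general
    {M N : ℕ}
    {Ω : Type} [MeasurableSpace Ω] (P : Measure Ω) [IsProbabilityMeasure P]
    (σp : ℕ → Ω → Equiv.Perm (Fin N))
    (hσmeas : ∀ t, @Measurable Ω (Equiv.Perm (Fin N)) _ ⊤ (σp t))
    (Qg : Fin N → EuclideanSpace ℝ (Fin M) → EuclideanSpace ℝ (Fin M))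
    (δ : ℝ)
    (hLip : ∀ n x y, ‖Qg n x - Qg n y‖ ≤ δ * ‖x - y‖)
    (wstar : EuclideanSpace ℝ (Fin M))
    (hstar : ∑ n, Qg n wstar = 0)
    (μ : ℝ)
    (w : ℕ → ℕ → Ω → EuclideanSpace ℝ (Fin M))
    (φv : ℕ → ℕ → Fin N → Ω → EuclideanSpace ℝ (Fin M))
    (hw00 : ∀ ω, w 0 0 ω = 0)
    (hφ00 : ∀ n ω, Qg n (φv 0 0 n ω) = 0)
    (hwrec : ∀ (t : ℕ) (i : Fin N) (ω : Ω),
      w t ((i : ℕ) + 1) ω = w t (i : ℕ) ω - μ •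
        (Qg (σp t ω i) (w t (i : ℕ) ω) - Qg (σp t ω i) (φv t (i : ℕ) (σp t ω i) ω)
          + (N : ℝ)⁻¹ • ∑ m, Qg m (φv t (i : ℕ) m ω)))
    (hφrec1 : ∀ (t : ℕ) (i : Fin N) (ω : Ω),
      φv t ((i : ℕ) + 1) (σp t ω i) ω = w t ((i : ℕ) + 1) ω)
    (hφrec2 : ∀ (t : ℕ) (i : Fin N) (m : Fin N) (ω : Ω), m ≠ σp t ω i →
      φv t ((i : ℕ) + 1) m ω = φv t (i : ℕ) m ω)
    (hwepoch : ∀ (t : ℕ) (ω : Ω), w (t + 1) 0 ω = w t N ω)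
    (hφepoch : ∀ (t : ℕ) (m : Fin N) (ω : Ω), φv (t + 1) 0 m ω = φv t N m ω)
    :
    -- Forward inner-difference bound.
    ∀ t : ℕ, 1 ≤ t →
      ∑ i ∈ Finset.Ico 1 N, ∫ ω, ‖w t i ω - w t 0 ω‖ ^ 2 ∂P ≤
        5 * δ ^ 2 * μ ^ 2 * N ^ 2 *
            ((∑ i ∈ Finset.Ico 1 N, ∫ ω, ‖w t i ω - w t 0 ω‖ ^ 2 ∂P) +
              ∑ i ∈ Finset.Ico 1 N, ∫ ω, ‖w (t - 1) N ω - w (t - 1) i ω‖ ^ 2 ∂P) +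
          3 * δ ^ 2 * μ ^ 2 * N ^ 3 * ∫ ω, ‖wstar - w t 0 ω‖ ^ 2 ∂P := by
  intro t ht
  obtain ⟨s, rfl⟩ : ∃ s, t = s + 1 := ⟨t - 1, by omega⟩
  rw [Nat.add_sub_cancel]
  have hσ : ∀ t (i m : Fin N), MeasurableSet {ω | σp t ω i = m} := fun t i m =>
    hσmeas t (MeasurableSpace.measurableSet_top (s := {π : Equiv.Perm (Fin N) | π i = m}))
  have hmem : ∀ t, ∀ i ≤ N, MemLp (w t i) 2 P := fun t i hi =>
    (memLp_saga_iterates hσ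
      (fun n => LipschitzWith.of_dist_le' fun x y => by simpa only [dist_eq_norm] using hLip n x y)
      hwrec hφrec1 hφrec2 hwepoch hφepoch (funext hw00 ▸ MemLp.zero)
      (fun m => funext (hφ00 m) ▸ MemLp.zero) t hi).1
  have hIco : ∀ i ∈ Ico 1 N, i ≤ N := fun i hi => (mem_Ico.1 hi).2.le
  refine sum_integral_le_of_forall _ _ _
    (fun i hi => integrable_norm_sub_sq (hmem _ i (hIco i hi)) (hmem _ 0 N.zero_le))
    (fun i hi => integrable_norm_sub_sq (hmem s N le_rfl) (hmem s i (hIco i hi)))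
    (integrable_norm_sub_sq (memLp_const wstar) (hmem _ 0 N.zero_le)) fun ω => ?_
  have hhist : ∑ m, ‖φv (s + 1) 0 m ω - w (s + 1) 0 ω‖ ^ 2 =
      ∑ i ∈ Ico 1 N, ‖w s N ω - w s i ω‖ ^ 2 := by
    simp only [hφepoch, hwepoch]
    exact sum_norm_history_end_sub_sq (σp s ω) (w s · ω) (φv s · · ω) (hφrec1 s · ω)
      (hφrec2 s · · ω)
  have hdrift := saga_epoch_forward_diff_le hLip hstar μ (σp (s + 1) ω) (w (s + 1) · ω)
    (φv (s + 1) · · ω) (hwrec (s + 1) · ω) (hφrec1 (s + 1) · ω) (hφrec2 (s + 1) · · ω)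
  rw [hhist] at hdrift
  refine hdrift.trans ?_
  gcongr <;> norm_num

theorem stmt_3
    {M N : ℕ} (hM : 1 ≤ M) (hN : 1 ≤ N)
    {Ω : Type} [MeasurableSpace Ω] (P : Measure Ω) [IsProbabilityMeasure P]
    (σp : ℕ → Ω → Equiv.Perm (Fin N))
    (hσmeas : ∀ t, @Measurable Ω (Equiv.Perm (Fin N)) _ ⊤ (σp t))
    (hσunif : ∀ t (π : Equiv.Perm (Fin N)),
      P {ω | σp t ω = π} = ((Nat.factorial N : ℝ≥0∞))⁻¹)
    (hσindep : iIndepFun (m := fun _ : ℕ => (⊤ : MeasurableSpace (Equiv.Perm (Fin N)))) σp P)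
    (Q : Fin N → EuclideanSpace ℝ (Fin M) → ℝ)
    (Qg : Fin N → EuclideanSpace ℝ (Fin M) → EuclideanSpace ℝ (Fin M))
    (δ ν : ℝ) (hδ : 0 < δ) (hν : 0 < ν)
    (hQdiff : ∀ n x, HasGradientAt (Q n) (Qg n x) x)
    (hQconv : ∀ n, ConvexOn ℝ Set.univ (Q n))
    (hLip : ∀ n x y, ‖Qg n x - Qg n y‖ ≤ δ * ‖x - y‖)
    (hSC : ∀ x y : EuclideanSpace ℝ (Fin M),
      ν * ‖x - y‖ ^ 2 ≤ ⟪((N : ℝ)⁻¹ • ∑ n, Qg n x) - ((N : ℝ)⁻¹ • ∑ n, Qg n y), x - y⟫)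
    (wstar : EuclideanSpace ℝ (Fin M))
    (hstar : ∑ n, Qg n wstar = 0)
    (μ : ℝ) (hμpos : 0 < μ)
    (w : ℕ → ℕ → Ω → EuclideanSpace ℝ (Fin M))
    (φv : ℕ → ℕ → Fin N → Ω → EuclideanSpace ℝ (Fin M))
    (hw00 : ∀ ω, w 0 0 ω = 0)
    (hφ00 : ∀ n ω, Qg n (φv 0 0 n ω) = 0)
    (hwrec : ∀ (t : ℕ) (i : Fin N) (ω : Ω),
      w t ((i : ℕ) + 1) ω = w t (i : ℕ) ω - μ •
        (Qg (σp t ω i) (w t (i : ℕ) ω) - Qg (σp t ω i) (φv t (i : ℕ) (σp t ω i) ω)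
          + (N : ℝ)⁻¹ • ∑ m, Qg m (φv t (i : ℕ) m ω)))
    (hφrec1 : ∀ (t : ℕ) (i : Fin N) (ω : Ω),
      φv t ((i : ℕ) + 1) (σp t ω i) ω = w t ((i : ℕ) + 1) ω)
    (hφrec2 : ∀ (t : ℕ) (i : Fin N) (m : Fin N) (ω : Ω), m ≠ σp t ω i →
      φv t ((i : ℕ) + 1) m ω = φv t (i : ℕ) m ω)
    (hwepoch : ∀ (t : ℕ) (ω : Ω), w (t + 1) 0 ω = w t N ω)
    (hφepoch : ∀ (t : ℕ) (m : Fin N) (ω : Ω), φv (t + 1) 0 m ω = φv t N m ω)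
    :
    -- Forward inner-difference bound.
    ∀ t : ℕ, 1 ≤ t →
      ∑ i ∈ Finset.Ico 1 N, ∫ ω, ‖w t i ω - w t 0 ω‖ ^ 2 ∂P ≤
        5 * δ ^ 2 * μ ^ 2 * N ^ 2 *
            ((∑ i ∈ Finset.Ico 1 N, ∫ ω, ‖w t i ω - w t 0 ω‖ ^ 2 ∂P) +
              ∑ i ∈ Finset.Ico 1 N, ∫ ω, ‖w (t - 1) N ω - w (t - 1) i ω‖ ^ 2 ∂P) +
          3 * δ ^ 2 * μ ^ 2 * N ^ 3 * ∫ ω, ‖wstar - w t 0 ω‖ ^ 2 ∂P :=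
  stmt_3_general P σp hσmeas Qg δ hLip wstar hstar μ w φv hw00 hφ00 hwrec hφrec1 hφrec2 hwepoch
    hφepoch
end

section
/- For SAGA-RR with step size μ > 0, the backward inner difference in epoch t ≥ 2 satisfies Σ_{i=1}^{N−1} E‖w_N^{t−1} − w_i^{t−1}‖² ≤ 5δ²μ²N² ( Σ_{i=1}^{N−1} E‖w_i^{t−1} − w_0^{t−1}‖² + Σ_{i=1}^{N−1} E‖w_N^{t−2} − w_i^{t−2}‖² ) + 3δ²μ²N³ E‖w̃_0^{t−1}‖². -/
open MeasureTheory ProbabilityTheory Finset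
open scoped RealInnerProductSpace ENNReal

/-!
The bound holds for every realisation of the permutations; the expectations are then handled by
monotonicity of the integral, every iterate being bounded and measurable because it is a function
of finitely many permutations.

Pointwise, `‖w_N - w_i‖² ≤ (N - i) ∑_j ‖w_{j+1} - w_j‖²` and `∑_{1 ≤ i < N} (N - i) ≤ N² / 2`.
Since `∑ₙ ∇Q(w⋆; xₙ) = 0`, the Lipschitz bound controls each increment `w_{j+1} - w_j` by `μ δ`
times the distances to `w_0` of the current iterate, of the history points and of `w⋆`. At step
`j` of an epoch, the history point of a sample is the iterate that followed its last visit: in the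
current epoch if it was already drawn, otherwise in the previous one (recall `w_0^t = w_N^{t-1}`).
Each sample being drawn exactly once per epoch, the squared distances of the history points to
`w_0` sum to at most the forward sum of the current epoch plus the backward sum of the previous
one. The constants come from `(a + b + c + r)² ≤ 5 (a² + b² + c²) + 6 r²`.
-/
theorem sum_perm_val_succ_eq_sum_Ico {R : Type*} [AddCommMonoid R] {n : ℕ}
    (π : Equiv.Perm (Fin n)) {f : ℕ → R} (hf : f n = 0) :
    ∑ m : Fin n, f ((π m : ℕ) + 1) = ∑ k ∈ Ico 1 n, f k := by
  rw [Equiv.sum_comp π (fun k : Fin n => f ((k : ℕ) + 1)),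
    Fin.sum_univ_eq_sum_range (fun k => f (k + 1)), sum_Ico_eq_sum_range]
  cases n with
  | zero => simp
  | succ n => simp [sum_range_succ, hf, add_comm]

theorem sum_range_eq_sum_Ico_one {R : Type*} [AddCommMonoid R] {f : ℕ → R} (hf : f 0 = 0)
    (n : ℕ) : ∑ k ∈ range n, f k = ∑ k ∈ Ico 1 n, f k := by
  cases n with
  | zero => simp
  | succ n => rw [sum_range_eq_add_Ico f n.succ_pos, hf, zero_add]

theorem sum_Ico_one_sub_mul_two_le (n : ℕ) : (∑ i ∈ Ico 1 n, (n - i)) * 2 ≤ n ^ 2 := by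
  have hreflect : ∑ i ∈ Ico 1 n, (n - i) = ∑ i ∈ range n, i := by
    rw [sum_Ico_reflect (fun i => i) 1 n.le_succ, Nat.add_sub_cancel_left, Nat.add_sub_cancel,
      sum_range_eq_sum_Ico_one (f := fun i => i) rfl]
  rw [hreflect, sum_range_id_mul_two, sq]
  exact Nat.mul_le_mul_left n (Nat.sub_le n 1)

theorem sq_add_add_add_le (a b c r : ℝ) :
    (a + b + c + r) ^ 2 ≤ 5 * (a ^ 2 + b ^ 2 + c ^ 2) + 6 * r ^ 2 := by
  nlinarith [sq_nonneg (a - b), sq_nonneg (a - c), sq_nonneg (b - c),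
    sq_nonneg (3 * a - 5 * r), sq_nonneg (3 * b - 5 * r), sq_nonneg (3 * c - 5 * r)]

theorem norm_sub_sq_le_mul_sum_norm_sub_sq {E : Type*} [SeminormedAddCommGroup E] (f : ℕ → E)
    {i n : ℕ} (hin : i ≤ n) :
    ‖f n - f i‖ ^ 2 ≤ (n - i : ℕ) * ∑ j ∈ Ico i n, ‖f (j + 1) - f j‖ ^ 2 := by
  rw [← sum_Ico_sub f hin, ← Nat.card_Ico]
  calc ‖∑ j ∈ Ico i n, (f (j + 1) - f j)‖ ^ 2 ≤ (∑ j ∈ Ico i n, ‖f (j + 1) - f j‖) ^ 2 := by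
        gcongr; exact norm_sum_le _ _
    _ ≤ _ := sq_sum_le_card_mul_sum_sq

theorem sum_Ico_norm_last_sub_sq_le {E : Type*} [SeminormedAddCommGroup E] (f : ℕ → E)
    (n : ℕ) :
    ∑ i ∈ Ico 1 n, ‖f n - f i‖ ^ 2 ≤ n ^ 2 / 2 * ∑ j ∈ range n, ‖f (j + 1) - f j‖ ^ 2 := by
  set S := ∑ j ∈ range n, ‖f (j + 1) - f j‖ ^ 2
  have hgauss : (∑ i ∈ Ico 1 n, ((n - i : ℕ) : ℝ)) ≤ n ^ 2 / 2 := by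
    rw [le_div_iff₀ two_pos]; exact_mod_cast sum_Ico_one_sub_mul_two_le n
  calc ∑ i ∈ Ico 1 n, ‖f n - f i‖ ^ 2 ≤ ∑ i ∈ Ico 1 n, ((n - i : ℕ) : ℝ) * S := by
        gcongr with i hi
        refine (norm_sub_sq_le_mul_sum_norm_sub_sq f (mem_Ico.1 hi).2.le).trans ?_
        gcongr
        exact sum_le_sum_of_subset_of_nonneg
          (Nat.Ico_zero_eq_range n ▸ Ico_subset_Ico i.zero_le le_rfl) fun _ _ _ => sq_nonneg _
    _ = (∑ i ∈ Ico 1 n, ((n - i : ℕ) : ℝ)) * S := (sum_mul _ _ _).symm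
    _ ≤ n ^ 2 / 2 * S := by gcongr

section

variable {E : Type*} [NormedAddCommGroup E] [NormedSpace ℝ E] {N : ℕ} {Ω : Type*}

/-- The SAGA-RR recursion: `σp t ω i` is the sample σ^t(i+1) drawn at iteration `i` of epoch `t`,
`w t i` is the iterate w_i^t, `φv t i n` the history variable φ_{i,n}^t and `Qg n` the gradient
of `Q(·; x_n)`. -/
structure IsSagaRR (σp : ℕ → Ω → Equiv.Perm (Fin N)) (Qg : Fin N → E → E) (μ : ℝ)
    (w : ℕ → ℕ → Ω → E) (φv : ℕ → ℕ → Fin N → Ω → E) : Prop where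
  iterate_succ : ∀ (t : ℕ) (i : Fin N) (ω : Ω),
    w t ((i : ℕ) + 1) ω = w t (i : ℕ) ω - μ •
      (Qg (σp t ω i) (w t (i : ℕ) ω) - Qg (σp t ω i) (φv t (i : ℕ) (σp t ω i) ω)
        + (N : ℝ)⁻¹ • ∑ m, Qg m (φv t (i : ℕ) m ω))
  history_succ_self : ∀ (t : ℕ) (i : Fin N) (ω : Ω),
    φv t ((i : ℕ) + 1) (σp t ω i) ω = w t ((i : ℕ) + 1) ω
  history_succ_of_ne : ∀ (t : ℕ) (i m : Fin N) (ω : Ω), m ≠ σp t ω i →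
    φv t ((i : ℕ) + 1) m ω = φv t (i : ℕ) m ω
  iterate_epoch : ∀ (t : ℕ) (ω : Ω), w (t + 1) 0 ω = w t N ω
  history_epoch : ∀ (t : ℕ) (m : Fin N) (ω : Ω), φv (t + 1) 0 m ω = φv t N m ω

def permsUpTo (σp : ℕ → Ω → Equiv.Perm (Fin N)) (t : ℕ) (ω : Ω) :
    Fin (t + 1) → Equiv.Perm (Fin N) :=
  fun k => σp k ω

def DependsOnPermsUpTo (σp : ℕ → Ω → Equiv.Perm (Fin N)) (Qg : Fin N → E → E)
    (w : ℕ → ℕ → Ω → E) (φv : ℕ → ℕ → Fin N → Ω → E) (t i : ℕ) : Prop :=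
  (w t i).FactorsThrough (permsUpTo σp t) ∧
    ∀ m, (fun ω => Qg m (φv t i m ω)).FactorsThrough (permsUpTo σp t)

namespace IsSagaRR

variable {σp : ℕ → Ω → Equiv.Perm (Fin N)} {Qg : Fin N → E → E} {μ : ℝ}
  {w : ℕ → ℕ → Ω → E} {φv : ℕ → ℕ → Fin N → Ω → E}

theorem history_eq (h : IsSagaRR σp Qg μ w φv) (t : ℕ) (ω : Ω) :
    ∀ j ≤ N, ∀ m, φv t j m ω =
      if ((σp t ω).symm m : ℕ) < j then w t (((σp t ω).symm m : ℕ) + 1) ω else φv t 0 m ω := by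
  intro j
  induction j with
  | zero => simp
  | succ j ih =>
    intro hj m
    let i : Fin N := ⟨j, hj⟩
    by_cases hm : m = σp t ω i
    · subst hm
      simpa [i] using h.history_succ_self t i ω
    · have hne : ((σp t ω).symm m : ℕ) ≠ j := fun hc => hm (by
        rw [← Equiv.apply_symm_apply (σp t ω) m, show (σp t ω).symm m = i from Fin.ext hc])
      rw [show j + 1 = (i : ℕ) + 1 from rfl, h.history_succ_of_ne t i m ω hm,
        ih (Nat.le_of_succ_le hj)]
      simp only [i, Nat.lt_succ_iff_lt_or_eq, hne, or_false]

theorem history_zero_succ (h : IsSagaRR σp Qg μ w φv) (t : ℕ) (m : Fin N) (ω : Ω) :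
    φv (t + 1) 0 m ω = w t (((σp t ω).symm m : ℕ) + 1) ω := by
  rw [h.history_epoch, h.history_eq t ω N le_rfl, if_pos ((σp t ω).symm m).isLt]

theorem norm_iterate_succ_sub_le (h : IsSagaRR σp Qg μ w φv) {δ : ℝ} (hδ : 0 ≤ δ)
    (hLip : ∀ n x y, ‖Qg n x - Qg n y‖ ≤ δ * ‖x - y‖) {wstar : E}
    (hstar : ∑ n, Qg n wstar = 0) (z : E) (t : ℕ) (i : Fin N) (ω : Ω) :
    ‖w t ((i : ℕ) + 1) ω - w t i ω‖ ≤ |μ| * δ * (‖w t i ω - z‖ + ‖φv t i (σp t ω i) ω - z‖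
      + (∑ m, ‖φv t i m ω - z‖) / N + ‖wstar - z‖) := by
  set n := σp t ω i
  have hN : (N : ℝ) ≠ 0 := Nat.cast_ne_zero.2 (Fin.pos i).ne'
  have hsel : ‖Qg n (w t i ω) - Qg n (φv t i n ω)‖ ≤
      δ * (‖w t i ω - z‖ + ‖φv t i n ω - z‖) := by
    refine (hLip n _ _).trans (mul_le_mul_of_nonneg_left ?_ hδ)
    rw [norm_sub_rev (φv t i n ω)]
    exact norm_sub_le_norm_sub_add_norm_sub _ _ _
  have havg : ‖(N : ℝ)⁻¹ • ∑ m, Qg m (φv t i m ω)‖ ≤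
      δ * ((∑ m, ‖φv t i m ω - z‖) / N + ‖wstar - z‖) := by
    calc ‖(N : ℝ)⁻¹ • ∑ m, Qg m (φv t i m ω)‖
        = (N : ℝ)⁻¹ * ‖∑ m, (Qg m (φv t i m ω) - Qg m wstar)‖ := by
          rw [sum_sub_distrib, hstar, sub_zero, norm_smul, norm_inv, RCLike.norm_natCast]
      _ ≤ (N : ℝ)⁻¹ * ∑ m, δ * (‖φv t i m ω - z‖ + ‖wstar - z‖) := by
          gcongr
          refine (norm_sum_le _ _).trans (sum_le_sum fun m _ => (hLip m _ _).trans ?_)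
          gcongr
          rw [norm_sub_rev wstar]
          exact norm_sub_le_norm_sub_add_norm_sub _ _ _
      _ = δ * ((∑ m, ‖φv t i m ω - z‖) / N + ‖wstar - z‖) := by
          rw [← mul_sum, sum_add_distrib, sum_const, card_univ, Fintype.card_fin, nsmul_eq_mul]
          field_simp
  rw [h.iterate_succ, sub_sub_cancel_left, norm_neg, norm_smul, Real.norm_eq_abs, mul_assoc]
  gcongr
  calc _ ≤ _ := norm_add_le _ _
    _ ≤ _ := add_le_add hsel havg
    _ = _ := by ring

theorem sum_norm_history_sub_sq_le (h : IsSagaRR σp Qg μ w φv) (t : ℕ) (ω : Ω) {j : ℕ}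
    (hj : j < N) :
    ∑ m, ‖φv (t + 1) j m ω - w (t + 1) 0 ω‖ ^ 2 ≤
      (∑ i ∈ Ico 1 N, ‖w (t + 1) i ω - w (t + 1) 0 ω‖ ^ 2) +
        ∑ i ∈ Ico 1 N, ‖w t N ω - w t i ω‖ ^ 2 := by
  set F : ℕ → ℝ := fun k => if k < N then ‖w (t + 1) k ω - w (t + 1) 0 ω‖ ^ 2 else 0
  set G : ℕ → ℝ := fun k => ‖w t N ω - w t k ω‖ ^ 2
  have hF : ∑ k ∈ Ico 1 N, F k = ∑ i ∈ Ico 1 N, ‖w (t + 1) i ω - w (t + 1) 0 ω‖ ^ 2 :=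
    sum_congr rfl fun k hk => if_pos (mem_Ico.1 hk).2
  have hbound : ∀ m, ‖φv (t + 1) j m ω - w (t + 1) 0 ω‖ ^ 2 ≤
      F (((σp (t + 1) ω).symm m : ℕ) + 1) + G (((σp t ω).symm m : ℕ) + 1) := by
    intro m
    rw [h.history_eq (t + 1) ω j hj.le m]
    split_ifs with hlt
    · have hlt' : ((σp (t + 1) ω).symm m : ℕ) + 1 < N := by omega
      simp only [F, if_pos hlt']
      exact le_add_of_nonneg_right (sq_nonneg _)
    · rw [h.history_zero_succ, h.iterate_epoch, norm_sub_rev]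
      refine le_add_of_nonneg_left ?_
      simp only [F]
      split_ifs <;> positivity
  calc _ ≤ ∑ m, (F (((σp (t + 1) ω).symm m : ℕ) + 1) + G (((σp t ω).symm m : ℕ) + 1)) :=
        sum_le_sum fun m _ => hbound m
    _ = _ := by
      rw [sum_add_distrib, sum_perm_val_succ_eq_sum_Ico _ (f := F) (by simp [F]),
        sum_perm_val_succ_eq_sum_Ico _ (f := G) (by simp [G]), hF]

theorem sum_norm_selected_history_sub_sq (h : IsSagaRR σp Qg μ w φv) (t : ℕ) (ω : Ω) :
    ∑ j : Fin N, ‖φv (t + 1) j (σp (t + 1) ω j) ω - w (t + 1) 0 ω‖ ^ 2 =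
      ∑ i ∈ Ico 1 N, ‖w t N ω - w t i ω‖ ^ 2 := by
  have hsel : ∀ j : Fin N, φv (t + 1) j (σp (t + 1) ω j) ω =
      w t ((((σp (t + 1) ω).trans (σp t ω).symm) j : ℕ) + 1) ω := by
    intro j
    rw [h.history_eq (t + 1) ω j j.isLt.le, Equiv.symm_apply_apply, if_neg (lt_irrefl _),
      h.history_zero_succ]
    rfl
  calc _ = ∑ j : Fin N,
        ‖w t N ω - w t ((((σp (t + 1) ω).trans (σp t ω).symm) j : ℕ) + 1) ω‖ ^ 2 :=
        sum_congr rfl fun j _ => by rw [hsel, h.iterate_epoch, norm_sub_rev]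
    _ = _ := sum_perm_val_succ_eq_sum_Ico _ (f := fun k => ‖w t N ω - w t k ω‖ ^ 2) (by simp)

theorem sum_norm_iterate_succ_sub_sq_le (h : IsSagaRR σp Qg μ w φv) {δ : ℝ} (hδ : 0 ≤ δ)
    (hLip : ∀ n x y, ‖Qg n x - Qg n y‖ ≤ δ * ‖x - y‖) {wstar : E}
    (hstar : ∑ n, Qg n wstar = 0) (t : ℕ) (ω : Ω) :
    ∑ j : Fin N, ‖w (t + 1) ((j : ℕ) + 1) ω - w (t + 1) j ω‖ ^ 2 ≤
      μ ^ 2 * δ ^ 2 * (10 * ((∑ i ∈ Ico 1 N, ‖w (t + 1) i ω - w (t + 1) 0 ω‖ ^ 2) +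
        ∑ i ∈ Ico 1 N, ‖w t N ω - w t i ω‖ ^ 2) + 6 * N * ‖wstar - w (t + 1) 0 ω‖ ^ 2) := by
  set x₀ := w (t + 1) 0 ω
  set D := ∑ i ∈ Ico 1 N, ‖w (t + 1) i ω - x₀‖ ^ 2
  set B := ∑ i ∈ Ico 1 N, ‖w t N ω - w t i ω‖ ^ 2
  set r := ‖wstar - x₀‖
  set a : Fin N → ℝ := fun j => ‖w (t + 1) j ω - x₀‖
  set b : Fin N → ℝ := fun j => ‖φv (t + 1) j (σp (t + 1) ω j) ω - x₀‖
  set c : Fin N → ℝ := fun j => (∑ m, ‖φv (t + 1) j m ω - x₀‖) / N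
  have ha : ∑ j, a j ^ 2 = D := by
    rw [Fin.sum_univ_eq_sum_range (fun j => ‖w (t + 1) j ω - x₀‖ ^ 2),
      sum_range_eq_sum_Ico_one (by simp [x₀])]
  have hb : ∑ j, b j ^ 2 = B := h.sum_norm_selected_history_sub_sq t ω
  have hc : ∑ j, c j ^ 2 ≤ D + B := by
    rcases N.eq_zero_or_pos with rfl | hN
    · simp [D, B]
    calc ∑ j, c j ^ 2 ≤ ∑ _j : Fin N, (D + B) / N := sum_le_sum fun j _ => by
          have hjensen := sum_div_card_sq_le_sum_sq_div_card (s := univ)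
            (f := fun m => ‖φv (t + 1) j m ω - x₀‖)
          rw [card_univ, Fintype.card_fin] at hjensen
          exact hjensen.trans (div_le_div_of_nonneg_right
            (h.sum_norm_history_sub_sq_le t ω j.isLt) (Nat.cast_nonneg N))
      _ = D + B := by
          rw [sum_const, card_univ, Fintype.card_fin, nsmul_eq_mul]
          field_simp
  calc ∑ j : Fin N, ‖w (t + 1) ((j : ℕ) + 1) ω - w (t + 1) j ω‖ ^ 2
      ≤ ∑ j, μ ^ 2 * δ ^ 2 * (5 * (a j ^ 2 + b j ^ 2 + c j ^ 2) + 6 * r ^ 2) := by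
        gcongr with j
        calc _ ≤ (|μ| * δ * (a j + b j + c j + r)) ^ 2 := by
              gcongr; exact h.norm_iterate_succ_sub_le hδ hLip hstar x₀ (t + 1) j ω
          _ = μ ^ 2 * δ ^ 2 * (a j + b j + c j + r) ^ 2 := by rw [mul_pow, mul_pow, sq_abs]
          _ ≤ _ := by gcongr; exact sq_add_add_add_le _ _ _ _
    _ = μ ^ 2 * δ ^ 2 * (5 * (∑ j, a j ^ 2 + ∑ j, b j ^ 2 + ∑ j, c j ^ 2) + 6 * N * r ^ 2) := by
        simp only [← mul_sum, sum_add_distrib, sum_const, card_univ, Fintype.card_fin,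
          nsmul_eq_mul]
        ring
    _ ≤ _ := by
        rw [ha, hb]
        gcongr μ ^ 2 * δ ^ 2 * (?_ + _)
        linarith

theorem sum_norm_last_sub_sq_le (h : IsSagaRR σp Qg μ w φv) {δ : ℝ} (hδ : 0 ≤ δ)
    (hLip : ∀ n x y, ‖Qg n x - Qg n y‖ ≤ δ * ‖x - y‖) {wstar : E}
    (hstar : ∑ n, Qg n wstar = 0) (t : ℕ) (ω : Ω) :
    ∑ i ∈ Ico 1 N, ‖w (t + 1) N ω - w (t + 1) i ω‖ ^ 2 ≤
      5 * δ ^ 2 * μ ^ 2 * N ^ 2 * ((∑ i ∈ Ico 1 N, ‖w (t + 1) i ω - w (t + 1) 0 ω‖ ^ 2) +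
        ∑ i ∈ Ico 1 N, ‖w t N ω - w t i ω‖ ^ 2) +
      3 * δ ^ 2 * μ ^ 2 * N ^ 3 * ‖wstar - w (t + 1) 0 ω‖ ^ 2 := by
  calc _ ≤ N ^ 2 / 2 * ∑ j ∈ range N, ‖w (t + 1) (j + 1) ω - w (t + 1) j ω‖ ^ 2 :=
        sum_Ico_norm_last_sub_sq_le (fun i => w (t + 1) i ω) N
    _ ≤ N ^ 2 / 2 * (μ ^ 2 * δ ^ 2 *
          (10 * ((∑ i ∈ Ico 1 N, ‖w (t + 1) i ω - w (t + 1) 0 ω‖ ^ 2) +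
            ∑ i ∈ Ico 1 N, ‖w t N ω - w t i ω‖ ^ 2) + 6 * N * ‖wstar - w (t + 1) 0 ω‖ ^ 2)) := by
        rw [← Fin.sum_univ_eq_sum_range (fun j => ‖w (t + 1) (j + 1) ω - w (t + 1) j ω‖ ^ 2)]
        gcongr
        exact h.sum_norm_iterate_succ_sub_sq_le hδ hLip hstar t ω
    _ = _ := by ring

theorem dependsOnPermsUpTo_succ (h : IsSagaRR σp Qg μ w φv) {t : ℕ} {i : Fin N}
    (hi : DependsOnPermsUpTo σp Qg w φv t i) : DependsOnPermsUpTo σp Qg w φv t ((i : ℕ) + 1) := by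
  obtain ⟨hw, hg⟩ := hi
  have hσ : ∀ ⦃ω ω'⦄, permsUpTo σp t ω = permsUpTo σp t ω' → σp t ω = σp t ω' :=
    fun ω ω' hΦ => by simpa [permsUpTo] using congrFun hΦ (Fin.last t)
  have hw' : (w t ((i : ℕ) + 1)).FactorsThrough (permsUpTo σp t) := fun ω ω' hΦ => by
    have hg' : ∀ m, Qg m (φv t i m ω) = Qg m (φv t i m ω') := fun m => hg m hΦ
    simp only [h.iterate_succ, hσ hΦ, hw hΦ, hg']
  refine ⟨hw', fun m ω ω' hΦ => ?_⟩
  by_cases hm : m = σp t ω i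
  · have hm' : m = σp t ω' i := hσ hΦ ▸ hm
    dsimp only
    rw [hm, h.history_succ_self, ← hm, hm', h.history_succ_self, hw' hΦ]
  · have hm' : m ≠ σp t ω' i := hσ hΦ ▸ hm
    exact (congrArg (Qg m) (h.history_succ_of_ne t i m ω hm)).trans
      ((hg m hΦ).trans (congrArg (Qg m) (h.history_succ_of_ne t i m ω' hm').symm))

theorem dependsOnPermsUpTo_epoch (h : IsSagaRR σp Qg μ w φv) {t : ℕ}
    (hN : DependsOnPermsUpTo σp Qg w φv t N) : DependsOnPermsUpTo σp Qg w φv (t + 1) 0 := by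
  obtain ⟨hw, hg⟩ := hN
  have hrestrict : ∀ ⦃ω ω'⦄, permsUpTo σp (t + 1) ω = permsUpTo σp (t + 1) ω' →
      permsUpTo σp t ω = permsUpTo σp t ω' := fun ω ω' hΦ =>
    funext fun k => by simpa [permsUpTo] using congrFun hΦ k.castSucc
  refine ⟨fun ω ω' hΦ => ?_, fun m ω ω' hΦ => ?_⟩
  · rw [h.iterate_epoch, h.iterate_epoch, hw (hrestrict hΦ)]
  · simp only [h.history_epoch]
    exact hg m (hrestrict hΦ)

theorem dependsOnPermsUpTo (h : IsSagaRR σp Qg μ w φv) {x₀ : E} {g₀ : Fin N → E}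
    (hw₀ : ∀ ω, w 0 0 ω = x₀) (hφ₀ : ∀ n ω, Qg n (φv 0 0 n ω) = g₀ n) (t : ℕ) :
    ∀ i ≤ N, DependsOnPermsUpTo σp Qg w φv t i := by
  have hstart : DependsOnPermsUpTo σp Qg w φv t 0 := by
    cases t with
    | zero => exact ⟨fun ω ω' _ => by rw [hw₀, hw₀], fun m ω ω' _ => by simp [hφ₀]⟩
    | succ t => exact h.dependsOnPermsUpTo_epoch (h.dependsOnPermsUpTo hw₀ hφ₀ t N le_rfl)
  intro i
  induction i with
  | zero => exact fun _ => hstart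
  | succ i ih =>
    exact fun hi => h.dependsOnPermsUpTo_succ (i := ⟨i, hi⟩) (ih (Nat.le_of_succ_le hi))

theorem memLp_iterate [MeasurableSpace Ω] (P : Measure Ω) [IsFiniteMeasure P]
    (h : IsSagaRR σp Qg μ w φv) (hσmeas : ∀ t, @Measurable Ω (Equiv.Perm (Fin N)) _ ⊤ (σp t))
    {x₀ : E} {g₀ : Fin N → E} (hw₀ : ∀ ω, w 0 0 ω = x₀) (hφ₀ : ∀ n ω, Qg n (φv 0 0 n ω) = g₀ n)
    {t i : ℕ} (hi : i ≤ N) (p : ℝ≥0∞) : MemLp (w t i) p P := by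
  let _ : MeasurableSpace (Equiv.Perm (Fin N)) := ⊤
  set f := Function.extend (permsUpTo σp t) (w t i) 0
  have hwf : w t i = f ∘ permsUpTo σp t :=
    funext fun ω => ((h.dependsOnPermsUpTo hw₀ hφ₀ t i hi).1.extend_apply 0 ω).symm
  have hmeas : Measurable (permsUpTo σp t) := measurable_pi_lambda _ fun k => hσmeas k
  obtain ⟨C, hC⟩ := (Set.finite_range fun q => ‖f q‖).bddAbove
  rw [hwf]
  exact MemLp.of_bound (StronglyMeasurable.of_discrete.comp_measurable hmeas).aestronglyMeasurable
    C (ae_of_all _ fun ω => hC (Set.mem_range_self _))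

theorem sum_integral_norm_last_sub_sq_le [MeasurableSpace Ω] (P : Measure Ω) [IsFiniteMeasure P]
    (h : IsSagaRR σp Qg μ w φv) (hσmeas : ∀ t, @Measurable Ω (Equiv.Perm (Fin N)) _ ⊤ (σp t))
    {x₀ : E} {g₀ : Fin N → E} (hw₀ : ∀ ω, w 0 0 ω = x₀) (hφ₀ : ∀ n ω, Qg n (φv 0 0 n ω) = g₀ n)
    {δ : ℝ} (hδ : 0 ≤ δ) (hLip : ∀ n x y, ‖Qg n x - Qg n y‖ ≤ δ * ‖x - y‖) {wstar : E}
    (hstar : ∑ n, Qg n wstar = 0) (t : ℕ) :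
    ∑ i ∈ Ico 1 N, ∫ ω, ‖w (t + 1) N ω - w (t + 1) i ω‖ ^ 2 ∂P ≤
      5 * δ ^ 2 * μ ^ 2 * N ^ 2 *
          ((∑ i ∈ Ico 1 N, ∫ ω, ‖w (t + 1) i ω - w (t + 1) 0 ω‖ ^ 2 ∂P) +
            ∑ i ∈ Ico 1 N, ∫ ω, ‖w t N ω - w t i ω‖ ^ 2 ∂P) +
        3 * δ ^ 2 * μ ^ 2 * N ^ 3 * ∫ ω, ‖wstar - w (t + 1) 0 ω‖ ^ 2 ∂P := by
  have hL2 : ∀ s {i}, i ≤ N → MemLp (w s i) (2 : ℕ) P :=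
    fun s _ hi => h.memLp_iterate P hσmeas hw₀ hφ₀ hi _
  have hsq : ∀ {X Y : Ω → E}, MemLp X (2 : ℕ) P → MemLp Y (2 : ℕ) P →
      Integrable (fun ω => ‖X ω - Y ω‖ ^ 2) P :=
    fun hX hY => (hX.sub hY).integrable_norm_pow'
  have hL : ∀ i ∈ Ico 1 N, Integrable (fun ω => ‖w (t + 1) N ω - w (t + 1) i ω‖ ^ 2) P :=
    fun i hi => hsq (hL2 _ le_rfl) (hL2 _ (mem_Ico.1 hi).2.le)
  have hF : ∀ i ∈ Ico 1 N, Integrable (fun ω => ‖w (t + 1) i ω - w (t + 1) 0 ω‖ ^ 2) P :=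
    fun i hi => hsq (hL2 _ (mem_Ico.1 hi).2.le) (hL2 _ N.zero_le)
  have hB : ∀ i ∈ Ico 1 N, Integrable (fun ω => ‖w t N ω - w t i ω‖ ^ 2) P :=
    fun i hi => hsq (hL2 _ le_rfl) (hL2 _ (mem_Ico.1 hi).2.le)
  have hR : Integrable (fun ω => ‖wstar - w (t + 1) 0 ω‖ ^ 2) P :=
    hsq (memLp_const wstar) (hL2 _ N.zero_le)
  have hFB : Integrable (fun ω => (∑ i ∈ Ico 1 N, ‖w (t + 1) i ω - w (t + 1) 0 ω‖ ^ 2) +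
      ∑ i ∈ Ico 1 N, ‖w t N ω - w t i ω‖ ^ 2) P :=
    (integrable_finsetSum _ hF).add (integrable_finsetSum _ hB)
  rw [← integral_finsetSum _ hL, ← integral_finsetSum _ hF, ← integral_finsetSum _ hB,
    ← integral_add (integrable_finsetSum _ hF) (integrable_finsetSum _ hB),
    ← integral_const_mul, ← integral_const_mul, ← integral_add (hFB.const_mul _) (hR.const_mul _)]
  exact integral_mono (integrable_finsetSum _ hL) ((hFB.const_mul _).add (hR.const_mul _))
    fun ω => h.sum_norm_last_sub_sq_le hδ hLip hstar t ω

end IsSagaRR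

end

theorem stmt_4_general
    {M N : ℕ}
    {Ω : Type} [MeasurableSpace Ω] (P : Measure Ω) [IsProbabilityMeasure P]
    (σp : ℕ → Ω → Equiv.Perm (Fin N))
    (hσmeas : ∀ t, @Measurable Ω (Equiv.Perm (Fin N)) _ ⊤ (σp t))
    (Qg : Fin N → EuclideanSpace ℝ (Fin M) → EuclideanSpace ℝ (Fin M))
    (δ : ℝ) (hδ : 0 < δ)
    (hLip : ∀ n x y, ‖Qg n x - Qg n y‖ ≤ δ * ‖x - y‖)
    (wstar : EuclideanSpace ℝ (Fin M))
    (hstar : ∑ n, Qg n wstar = 0)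
    (μ : ℝ)
    (w : ℕ → ℕ → Ω → EuclideanSpace ℝ (Fin M))
    (φv : ℕ → ℕ → Fin N → Ω → EuclideanSpace ℝ (Fin M))
    (hw00 : ∀ ω, w 0 0 ω = 0)
    (hφ00 : ∀ n ω, Qg n (φv 0 0 n ω) = 0)
    (hwrec : ∀ (t : ℕ) (i : Fin N) (ω : Ω),
      w t ((i : ℕ) + 1) ω = w t (i : ℕ) ω - μ •
        (Qg (σp t ω i) (w t (i : ℕ) ω) - Qg (σp t ω i) (φv t (i : ℕ) (σp t ω i) ω)
          + (N : ℝ)⁻¹ • ∑ m, Qg m (φv t (i : ℕ) m ω)))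
    (hφrec1 : ∀ (t : ℕ) (i : Fin N) (ω : Ω),
      φv t ((i : ℕ) + 1) (σp t ω i) ω = w t ((i : ℕ) + 1) ω)
    (hφrec2 : ∀ (t : ℕ) (i : Fin N) (m : Fin N) (ω : Ω), m ≠ σp t ω i →
      φv t ((i : ℕ) + 1) m ω = φv t (i : ℕ) m ω)
    (hwepoch : ∀ (t : ℕ) (ω : Ω), w (t + 1) 0 ω = w t N ω)
    (hφepoch : ∀ (t : ℕ) (m : Fin N) (ω : Ω), φv (t + 1) 0 m ω = φv t N m ω)
    :
    -- Backward inner-difference bound.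
    ∀ t : ℕ, 2 ≤ t →
      ∑ i ∈ Finset.Ico 1 N, ∫ ω, ‖w (t - 1) N ω - w (t - 1) i ω‖ ^ 2 ∂P ≤
        5 * δ ^ 2 * μ ^ 2 * N ^ 2 *
            ((∑ i ∈ Finset.Ico 1 N, ∫ ω, ‖w (t - 1) i ω - w (t - 1) 0 ω‖ ^ 2 ∂P) +
              ∑ i ∈ Finset.Ico 1 N, ∫ ω, ‖w (t - 2) N ω - w (t - 2) i ω‖ ^ 2 ∂P) +
          3 * δ ^ 2 * μ ^ 2 * N ^ 3 * ∫ ω, ‖wstar - w (t - 1) 0 ω‖ ^ 2 ∂P := by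
  intro t ht
  obtain ⟨u, rfl⟩ : ∃ u, t = u + 2 := ⟨t - 2, by omega⟩
  have hsaga : IsSagaRR σp Qg μ w φv := ⟨hwrec, hφrec1, hφrec2, hwepoch, hφepoch⟩
  simpa using hsaga.sum_integral_norm_last_sub_sq_le P hσmeas hw00 hφ00 hδ.le hLip hstar u

theorem stmt_4
    {M N : ℕ} (hM : 1 ≤ M) (hN : 1 ≤ N)
    {Ω : Type} [MeasurableSpace Ω] (P : Measure Ω) [IsProbabilityMeasure P]
    (σp : ℕ → Ω → Equiv.Perm (Fin N))
    (hσmeas : ∀ t, @Measurable Ω (Equiv.Perm (Fin N)) _ ⊤ (σp t))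
    (hσunif : ∀ t (π : Equiv.Perm (Fin N)),
      P {ω | σp t ω = π} = ((Nat.factorial N : ℝ≥0∞))⁻¹)
    (hσindep : iIndepFun (m := fun _ : ℕ => (⊤ : MeasurableSpace (Equiv.Perm (Fin N)))) σp P)
    (Q : Fin N → EuclideanSpace ℝ (Fin M) → ℝ)
    (Qg : Fin N → EuclideanSpace ℝ (Fin M) → EuclideanSpace ℝ (Fin M))
    (δ ν : ℝ) (hδ : 0 < δ) (hν : 0 < ν)
    (hQdiff : ∀ n x, HasGradientAt (Q n) (Qg n x) x)
    (hQconv : ∀ n, ConvexOn ℝ Set.univ (Q n))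
    (hLip : ∀ n x y, ‖Qg n x - Qg n y‖ ≤ δ * ‖x - y‖)
    (hSC : ∀ x y : EuclideanSpace ℝ (Fin M),
      ν * ‖x - y‖ ^ 2 ≤ ⟪((N : ℝ)⁻¹ • ∑ n, Qg n x) - ((N : ℝ)⁻¹ • ∑ n, Qg n y), x - y⟫)
    (wstar : EuclideanSpace ℝ (Fin M))
    (hstar : ∑ n, Qg n wstar = 0)
    (μ : ℝ) (hμpos : 0 < μ)
    (w : ℕ → ℕ → Ω → EuclideanSpace ℝ (Fin M))
    (φv : ℕ → ℕ → Fin N → Ω → EuclideanSpace ℝ (Fin M))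
    (hw00 : ∀ ω, w 0 0 ω = 0)
    (hφ00 : ∀ n ω, Qg n (φv 0 0 n ω) = 0)
    (hwrec : ∀ (t : ℕ) (i : Fin N) (ω : Ω),
      w t ((i : ℕ) + 1) ω = w t (i : ℕ) ω - μ •
        (Qg (σp t ω i) (w t (i : ℕ) ω) - Qg (σp t ω i) (φv t (i : ℕ) (σp t ω i) ω)
          + (N : ℝ)⁻¹ • ∑ m, Qg m (φv t (i : ℕ) m ω)))
    (hφrec1 : ∀ (t : ℕ) (i : Fin N) (ω : Ω),
      φv t ((i : ℕ) + 1) (σp t ω i) ω = w t ((i : ℕ) + 1) ω)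
    (hφrec2 : ∀ (t : ℕ) (i : Fin N) (m : Fin N) (ω : Ω), m ≠ σp t ω i →
      φv t ((i : ℕ) + 1) m ω = φv t (i : ℕ) m ω)
    (hwepoch : ∀ (t : ℕ) (ω : Ω), w (t + 1) 0 ω = w t N ω)
    (hφepoch : ∀ (t : ℕ) (m : Fin N) (ω : Ω), φv (t + 1) 0 m ω = φv t N m ω)
    :
    -- Backward inner-difference bound.
    ∀ t : ℕ, 2 ≤ t →
      ∑ i ∈ Finset.Ico 1 N, ∫ ω, ‖w (t - 1) N ω - w (t - 1) i ω‖ ^ 2 ∂P ≤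
        5 * δ ^ 2 * μ ^ 2 * N ^ 2 *
            ((∑ i ∈ Finset.Ico 1 N, ∫ ω, ‖w (t - 1) i ω - w (t - 1) 0 ω‖ ^ 2 ∂P) +
              ∑ i ∈ Finset.Ico 1 N, ∫ ω, ‖w (t - 2) N ω - w (t - 2) i ω‖ ^ 2 ∂P) +
          3 * δ ^ 2 * μ ^ 2 * N ^ 3 * ∫ ω, ‖wstar - w (t - 1) 0 ω‖ ^ 2 ∂P :=
  stmt_4_general P σp hσmeas Qg δ hδ hLip wstar hstar μ w φv hw00 hφ00 hwrec hφrec1 hφrec2 hwepoch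
    hφepoch
end

section
/- For AVRG with step size μ > 0, the forward inner difference in epoch t ≥ 1 satisfies Σ_{i=0}^{N−1} E‖w_i^t − w_0^t‖² ≤ 3μ²δ²N² Σ_{i=0}^{N−1} E‖w_i^t − w_0^t‖² + μ²δ²N² ( Σ_{i=0}^{N−1} E‖w_N^{t−1} − w_i^{t−1}‖² + N · E‖w̃_0^t‖² ). -/
open MeasureTheory ProbabilityTheory Finset
open scoped RealInnerProductSpace ENNReal

/-!
For a fixed outcome the bound is deterministic. Inside epoch `t` the increments telescope to
`w_i - w_0 = -μ (∑_{j<i} d_j + i g)`, where `d_j = ∇Q(w_j) - ∇Q(w_0)` has norm at most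
`δ ‖w_j - w_0‖`, and the amortized gradient `g` splits into a staleness error (at most `δ` times
the root-mean-square distance of the previous epoch's iterates to `w_N^{t-1} = w_0^t`) plus
`∇J(w_0) - ∇J(w⋆)`. The inequality `‖a + b + c‖² ≤ 3 (‖a‖² + ‖b‖² + ‖c‖²)` and
`∑_{i<N} i² ≤ N³/3` produce the constants. Every iterate is a simple function of finitely many
permutations, so all expectations exist and the bound can be integrated.
-/

section Norms

variable {E : Type*} [SeminormedAddCommGroup E]

lemma norm_sum_sq_le_card_mul {ι : Type*} (s : Finset ι) (f : ι → E) :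
    ‖∑ i ∈ s, f i‖ ^ 2 ≤ #s * ∑ i ∈ s, ‖f i‖ ^ 2 :=
  (pow_le_pow_left₀ (norm_nonneg _) (norm_sum_le _ _) 2).trans sq_sum_le_card_mul_sum_sq

lemma norm_add₃_sq_le (a b c : E) :
    ‖a + b + c‖ ^ 2 ≤ 3 * (‖a‖ ^ 2 + ‖b‖ ^ 2 + ‖c‖ ^ 2) := by
  simpa [Fin.sum_univ_three, add_assoc] using norm_sum_sq_le_card_mul univ ![a, b, c]

lemma norm_inv_card_smul_sum_sub_sq_le [NormedSpace ℝ E] {ι : Type*} (s : Finset ι)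
    {δ : ℝ} (G : ι → E → E) (hG : ∀ i x y, ‖G i x - G i y‖ ≤ δ * ‖x - y‖) (x : ι → E) (y : E) :
    ‖(#s : ℝ)⁻¹ • ∑ i ∈ s, (G i (x i) - G i y)‖ ^ 2 ≤ δ ^ 2 / #s * ∑ i ∈ s, ‖x i - y‖ ^ 2 := by
  have hLip : ∀ i ∈ s, ‖G i (x i) - G i y‖ ^ 2 ≤ δ ^ 2 * ‖x i - y‖ ^ 2 := fun i _ => by
    rw [← mul_pow]; exact pow_le_pow_left₀ (norm_nonneg _) (hG i _ _) 2
  calc ‖(#s : ℝ)⁻¹ • ∑ i ∈ s, (G i (x i) - G i y)‖ ^ 2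
      = (#s : ℝ)⁻¹ ^ 2 * ‖∑ i ∈ s, (G i (x i) - G i y)‖ ^ 2 := by
        rw [norm_smul, mul_pow, norm_inv, Real.norm_natCast]
    _ ≤ (#s : ℝ)⁻¹ ^ 2 * (#s * ∑ i ∈ s, δ ^ 2 * ‖x i - y‖ ^ 2) := by
        gcongr
        exact (norm_sum_sq_le_card_mul _ _).trans (by gcongr with i hi; exact hLip i hi)
    _ = δ ^ 2 / #s * ∑ i ∈ s, ‖x i - y‖ ^ 2 := by
        rw [← mul_sum]
        rcases eq_or_ne (#s : ℝ) 0 with h | h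
        · simp [h]
        · field_simp

end Norms

lemma sum_range_sq_le (N : ℕ) : ∑ i ∈ range N, (i : ℝ) ^ 2 ≤ (N : ℝ) ^ 3 / 3 := by
  induction N with
  | zero => simp
  | succ n ih =>
    rw [sum_range_succ]
    push_cast
    nlinarith [(n.cast_nonneg : (0 : ℝ) ≤ n)]

section InnerLoop

variable {E : Type*} [SeminormedAddCommGroup E] [NormedSpace ℝ E] {N : ℕ} {μ δ : ℝ} {v : ℕ → E}

lemma sub_eq_neg_smul_sum_of_step {c : E} {d : ℕ → E} (hv : ∀ i < N, v (i + 1) = v i - μ • (d i + c))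
    {i : ℕ} (hi : i ≤ N) : v i - v 0 = -μ • (∑ j ∈ range i, d j + (i : ℝ) • c) := by
  induction i with
  | zero => simp
  | succ i ih =>
    rw [hv i hi, sub_right_comm, ih (Nat.le_of_succ_le hi), sum_range_succ]
    push_cast
    module

lemma norm_sub_sq_le_of_step {b e : E} {d : ℕ → E}
    (hv : ∀ i < N, v (i + 1) = v i - μ • (d i + (b + e)))
    (hd : ∀ i < N, ‖d i‖ ≤ δ * ‖v i - v 0‖) {i : ℕ} (hi : i ≤ N) :
    ‖v i - v 0‖ ^ 2 ≤ 3 * μ ^ 2 *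
      (N * δ ^ 2 * ∑ j ∈ range N, ‖v j - v 0‖ ^ 2 + (i : ℝ) ^ 2 * (‖b‖ ^ 2 + ‖e‖ ^ 2)) := by
  have hsum : ‖∑ j ∈ range i, d j‖ ^ 2 ≤ N * δ ^ 2 * ∑ j ∈ range N, ‖v j - v 0‖ ^ 2 := by
    calc ‖∑ j ∈ range i, d j‖ ^ 2 ≤ i * ∑ j ∈ range i, ‖d j‖ ^ 2 := by
          simpa using norm_sum_sq_le_card_mul (range i) d
      _ ≤ N * ∑ j ∈ range N, ‖d j‖ ^ 2 := by
          gcongr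
      _ ≤ N * ∑ j ∈ range N, δ ^ 2 * ‖v j - v 0‖ ^ 2 := by
          gcongr with j hj
          rw [← mul_pow]
          exact pow_le_pow_left₀ (norm_nonneg _) (hd j (mem_range.mp hj)) 2
      _ = N * δ ^ 2 * ∑ j ∈ range N, ‖v j - v 0‖ ^ 2 := by rw [← mul_sum, mul_assoc]
  rw [sub_eq_neg_smul_sum_of_step hv hi, norm_smul, mul_pow, norm_neg, Real.norm_eq_abs, sq_abs, smul_add,
    ← add_assoc]
  calc μ ^ 2 * ‖∑ j ∈ range i, d j + (i : ℝ) • b + (i : ℝ) • e‖ ^ 2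
      ≤ μ ^ 2 * (3 * (‖∑ j ∈ range i, d j‖ ^ 2 + ‖(i : ℝ) • b‖ ^ 2 + ‖(i : ℝ) • e‖ ^ 2)) := by
        gcongr; exact norm_add₃_sq_le _ _ _
    _ ≤ _ := by
        simp only [norm_smul, mul_pow, Real.norm_natCast]
        nlinarith [sq_nonneg μ]

lemma sum_norm_sub_sq_le_of_step {b e : E}
    (hstep : ∀ i < N, ∃ d, v (i + 1) = v i - μ • (d + (b + e)) ∧ ‖d‖ ≤ δ * ‖v i - v 0‖) :
    ∑ i ∈ range N, ‖v i - v 0‖ ^ 2 ≤ 3 * μ ^ 2 * δ ^ 2 * N ^ 2 * ∑ i ∈ range N, ‖v i - v 0‖ ^ 2 +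
      μ ^ 2 * N ^ 3 * (‖b‖ ^ 2 + ‖e‖ ^ 2) := by
  choose! d hv hd using hstep
  set S := ∑ i ∈ range N, ‖v i - v 0‖ ^ 2
  calc S ≤ ∑ i ∈ range N, 3 * μ ^ 2 * (N * δ ^ 2 * S + (i : ℝ) ^ 2 * (‖b‖ ^ 2 + ‖e‖ ^ 2)) :=
        sum_le_sum fun i hi => norm_sub_sq_le_of_step hv hd (mem_range.mp hi).le
    _ = 3 * μ ^ 2 * δ ^ 2 * N ^ 2 * S +
          3 * μ ^ 2 * (‖b‖ ^ 2 + ‖e‖ ^ 2) * ∑ i ∈ range N, (i : ℝ) ^ 2 := by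
        rw [← mul_sum, sum_add_distrib, sum_const, card_range, nsmul_eq_mul, ← sum_mul]; ring
    _ ≤ 3 * μ ^ 2 * δ ^ 2 * N ^ 2 * S +
          3 * μ ^ 2 * (‖b‖ ^ 2 + ‖e‖ ^ 2) * ((N : ℝ) ^ 3 / 3) := by
        gcongr; exact sum_range_sq_le N
    _ = _ := by ring

end InnerLoop

lemma avrg_sum_norm_sub_sq_le {E : Type*} [SeminormedAddCommGroup E] [NormedSpace ℝ E]
    {N : ℕ} (hN : 1 ≤ N) {μ δ : ℝ} (Qg : Fin N → E → E)
    (hLip : ∀ n x y, ‖Qg n x - Qg n y‖ ≤ δ * ‖x - y‖) {wstar : E} (hstar : ∑ n, Qg n wstar = 0)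
    (π : Fin N → Fin N) (π' : Equiv.Perm (Fin N)) {u v : ℕ → E} (hv0 : v 0 = u N)
    (hv : ∀ i : Fin N, v ((i : ℕ) + 1) = v i - μ •
      (Qg (π i) (v i) - Qg (π i) (v 0) + (N : ℝ)⁻¹ • ∑ k : Fin N, Qg (π' k) (u k))) :
    ∑ i ∈ range N, ‖v i - v 0‖ ^ 2 ≤
      3 * μ ^ 2 * δ ^ 2 * N ^ 2 * ∑ i ∈ range N, ‖v i - v 0‖ ^ 2 +
        μ ^ 2 * δ ^ 2 * N ^ 2 * (∑ i ∈ range N, ‖u N - u i‖ ^ 2 + N * ‖wstar - v 0‖ ^ 2) := by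
  have hNne : (N : ℝ) ≠ 0 := by positivity
  set b := (N : ℝ)⁻¹ • ∑ k : Fin N, (Qg (π' k) (u k) - Qg (π' k) (u N))
  set e := (N : ℝ)⁻¹ • ∑ n : Fin N, (Qg n (v 0) - Qg n wstar)
  -- the amortized gradient is the full gradient at `v 0` plus the staleness error `b`
  have hbe : (N : ℝ)⁻¹ • ∑ k : Fin N, Qg (π' k) (u k) = b + e := by
    simp only [b, e, sum_sub_distrib, hstar, sub_zero, hv0, Equiv.sum_comp π' (Qg · (u N)),
      ← smul_add, sub_add_cancel]
  have hb : ‖b‖ ^ 2 ≤ δ ^ 2 / N * ∑ i ∈ range N, ‖u N - u i‖ ^ 2 := by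
    have := norm_inv_card_smul_sum_sub_sq_le univ (Qg ∘ π') (fun k => hLip (π' k)) (u ·) (u N)
    rw [card_univ, Fintype.card_fin, Fin.sum_univ_eq_sum_range (fun i => ‖u i - u N‖ ^ 2)] at this
    simpa only [Function.comp_apply, norm_sub_rev (u N)] using this
  have he : ‖e‖ ^ 2 ≤ δ ^ 2 * ‖wstar - v 0‖ ^ 2 := by
    have := norm_inv_card_smul_sum_sub_sq_le univ Qg hLip (fun _ => v 0) wstar
    simp only [card_univ, Fintype.card_fin, sum_const, nsmul_eq_mul] at this
    rwa [norm_sub_rev, ← mul_assoc, div_mul_cancel₀ _ hNne] at this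
  refine (sum_norm_sub_sq_le_of_step fun i hi => ⟨_, (hbe ▸ hv ⟨i, hi⟩), hLip _ _ _⟩).trans ?_
  calc _ ≤ 3 * μ ^ 2 * δ ^ 2 * N ^ 2 * ∑ i ∈ range N, ‖v i - v 0‖ ^ 2 + μ ^ 2 * N ^ 3 *
        (δ ^ 2 / N * ∑ i ∈ range N, ‖u N - u i‖ ^ 2 + δ ^ 2 * ‖wstar - v 0‖ ^ 2) := by
        gcongr
    _ = _ := by field_simp

section SimpleFunctions

variable {Ω : Type*} [MeasurableSpace Ω]

def IsSimpleFunc {β : Type*} (f : Ω → β) : Prop := ∃ F : SimpleFunc Ω β, ⇑F = f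

lemma isSimpleFunc_const {β : Type*} (b : β) : IsSimpleFunc fun _ : Ω => b :=
  ⟨SimpleFunc.const Ω b, rfl⟩

lemma isSimpleFunc_of_measurable_top {β : Type*} [Finite β] {f : Ω → β}
    (hf : @Measurable Ω β _ ⊤ f) : IsSimpleFunc f :=
  ⟨⟨f, fun _ => hf MeasurableSpace.measurableSet_top, Set.toFinite _⟩, rfl⟩

lemma IsSimpleFunc.map {β γ : Type*} {f : Ω → β} (op : β → γ) (hf : IsSimpleFunc f) :
    IsSimpleFunc fun ω => op (f ω) := by
  obtain ⟨F, rfl⟩ := hf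
  exact ⟨F.map op, rfl⟩

lemma IsSimpleFunc.comp₂ {β γ δ : Type*} {f : Ω → β} {g : Ω → γ} (op : β → γ → δ)
    (hf : IsSimpleFunc f) (hg : IsSimpleFunc g) : IsSimpleFunc fun ω => op (f ω) (g ω) := by
  obtain ⟨F, rfl⟩ := hf
  obtain ⟨G, rfl⟩ := hg
  exact ⟨(F.pair G).map (Function.uncurry op), rfl⟩

lemma IsSimpleFunc.finset_sum {ι β : Type*} [AddCommMonoid β] (s : Finset ι) {f : ι → Ω → β}
    (hf : ∀ i ∈ s, IsSimpleFunc (f i)) : IsSimpleFunc fun ω => ∑ i ∈ s, f i ω := by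
  classical
  induction s using Finset.induction with
  | empty => simpa using isSimpleFunc_const (0 : β)
  | insert a s ha ih =>
    simp only [sum_insert ha]
    exact (hf a (mem_insert_self a s)).comp₂ (· + ·) (ih fun i hi => hf i (mem_insert_of_mem hi))

lemma IsSimpleFunc.integrable {E : Type*} [NormedAddCommGroup E] {P : Measure Ω}
    [IsFiniteMeasure P] {f : Ω → E} (hf : IsSimpleFunc f) : Integrable f P := by
  obtain ⟨F, rfl⟩ := hf
  exact F.integrable_of_isFiniteMeasure

end SimpleFunctions

section Iterates

variable {Ω E : Type*} [MeasurableSpace Ω] [AddCommGroup E] [Module ℝ E] {N : ℕ} {μ : ℝ}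
  {Qg : Fin N → E → E}

lemma isSimpleFunc_epoch {σ : Ω → Equiv.Perm (Fin N)} {v : ℕ → Ω → E} {c : Ω → E}
    (hσ : IsSimpleFunc σ) (hv0 : IsSimpleFunc (v 0)) (hc : IsSimpleFunc c)
    (hv : ∀ (i : Fin N) ω, v ((i : ℕ) + 1) ω = v i ω - μ •
      (Qg (σ ω i) (v i ω) - Qg (σ ω i) (v 0 ω) + c ω)) :
    ∀ i ≤ N, IsSimpleFunc (v i) := by
  intro i
  induction i with
  | zero => exact fun _ => hv0
  | succ i ih =>
    intro hi
    rw [funext (hv ⟨i, hi⟩)]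
    exact hσ.comp₂ (fun π p => p.1 - μ • (Qg (π ⟨i, hi⟩) p.1 - Qg (π ⟨i, hi⟩) p.2.1 + p.2.2))
      ((ih (Nat.le_of_succ_le hi)).comp₂ Prod.mk (hv0.comp₂ Prod.mk hc))

lemma isSimpleFunc_avrg_iterates {σ : ℕ → Ω → Equiv.Perm (Fin N)}
    (hσ : ∀ t, IsSimpleFunc (σ t)) {w : ℕ → ℕ → Ω → E} {g : ℕ → Ω → E}
    (hw00 : ∀ ω, w 0 0 ω = 0) (hg0 : ∀ ω, g 0 ω = 0)
    (hwrec : ∀ (t : ℕ) (i : Fin N) (ω : Ω), w t ((i : ℕ) + 1) ω = w t (i : ℕ) ω - μ •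
      (Qg (σ t ω i) (w t (i : ℕ) ω) - Qg (σ t ω i) (w t 0 ω) + g t ω))
    (hgrec : ∀ (t : ℕ) (ω : Ω), g (t + 1) ω = (N : ℝ)⁻¹ • ∑ i : Fin N, Qg (σ t ω i) (w t i ω))
    (hwepoch : ∀ (t : ℕ) (ω : Ω), w (t + 1) 0 ω = w t N ω) (t : ℕ) :
    (∀ i ≤ N, IsSimpleFunc (w t i)) ∧ IsSimpleFunc (g t) := by
  induction t with
  | zero =>
    have hg : IsSimpleFunc (g 0) := by simpa [funext hg0] using isSimpleFunc_const (0 : E)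
    refine ⟨isSimpleFunc_epoch (hσ 0) ?_ hg (hwrec 0), hg⟩
    simpa [funext hw00] using isSimpleFunc_const (0 : E)
  | succ t ih =>
    have hg : IsSimpleFunc (g (t + 1)) := by
      rw [funext (hgrec t)]
      refine (IsSimpleFunc.finset_sum univ fun i _ => ?_).map ((N : ℝ)⁻¹ • ·)
      exact (hσ t).comp₂ (fun π x => Qg (π i) x) (ih.1 i i.is_lt.le)
    refine ⟨isSimpleFunc_epoch (hσ (t + 1)) ?_ hg (hwrec (t + 1)), hg⟩
    rw [funext (hwepoch t)]
    exact ih.1 N le_rfl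

end Iterates

theorem stmt_8_general
    {M N : ℕ} (hN : 1 ≤ N)
    {Ω : Type} [MeasurableSpace Ω] (P : Measure Ω) [IsProbabilityMeasure P]
    (σp : ℕ → Ω → Equiv.Perm (Fin N))
    (hσmeas : ∀ t, @Measurable Ω (Equiv.Perm (Fin N)) _ ⊤ (σp t))
    (Qg : Fin N → EuclideanSpace ℝ (Fin M) → EuclideanSpace ℝ (Fin M))
    (δ : ℝ)
    (hLip : ∀ n x y, ‖Qg n x - Qg n y‖ ≤ δ * ‖x - y‖)
    (wstar : EuclideanSpace ℝ (Fin M))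
    (hstar : ∑ n, Qg n wstar = 0)
    (μ : ℝ)
    (w : ℕ → ℕ → Ω → EuclideanSpace ℝ (Fin M))
    (g : ℕ → Ω → EuclideanSpace ℝ (Fin M))
    (hw00 : ∀ ω, w 0 0 ω = 0)
    (hg0 : ∀ ω, g 0 ω = 0)
    (hwrec : ∀ (t : ℕ) (i : Fin N) (ω : Ω),
      w t ((i : ℕ) + 1) ω = w t (i : ℕ) ω - μ •
        (Qg (σp t ω i) (w t (i : ℕ) ω) - Qg (σp t ω i) (w t 0 ω) + g t ω))
    (hgrec : ∀ (t : ℕ) (ω : Ω),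
      g (t + 1) ω = (N : ℝ)⁻¹ • ∑ i : Fin N, Qg (σp t ω i) (w t (i : ℕ) ω))
    (hwepoch : ∀ (t : ℕ) (ω : Ω), w (t + 1) 0 ω = w t N ω)
    :
    -- AVRG forward inner-difference bound.
    ∀ t : ℕ, 1 ≤ t →
      ∑ i ∈ Finset.range N, ∫ ω, ‖w t i ω - w t 0 ω‖ ^ 2 ∂P ≤
        3 * μ ^ 2 * δ ^ 2 * N ^ 2 *
            (∑ i ∈ Finset.range N, ∫ ω, ‖w t i ω - w t 0 ω‖ ^ 2 ∂P) +
          μ ^ 2 * δ ^ 2 * N ^ 2 *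
            ((∑ i ∈ Finset.range N, ∫ ω, ‖w (t - 1) N ω - w (t - 1) i ω‖ ^ 2 ∂P) +
              N * ∫ ω, ‖wstar - w t 0 ω‖ ^ 2 ∂P) := by
  intro t ht
  obtain ⟨s, rfl⟩ : ∃ s, t = s + 1 := ⟨t - 1, by omega⟩
  rw [Nat.add_sub_cancel]
  have hsimple t := (isSimpleFunc_avrg_iterates (fun t => isSimpleFunc_of_measurable_top
    (hσmeas t)) hw00 hg0 hwrec hgrec hwepoch t).1
  have hint : ∀ t, ∀ i ≤ N, ∀ j ≤ N, Integrable (fun ω => ‖w t i ω - w t j ω‖ ^ 2) P :=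
    fun t i hi j hj => ((hsimple t i hi).comp₂ (‖· - ·‖ ^ 2) (hsimple t j hj)).integrable
  have hint₀ : Integrable (fun ω => ‖wstar - w (s + 1) 0 ω‖ ^ 2) P :=
    ((hsimple _ 0 N.zero_le).map (‖wstar - ·‖ ^ 2)).integrable
  have hcur := integrable_finsetSum (range N) fun i hi =>
    hint (s + 1) i (mem_range.mp hi).le 0 N.zero_le
  have hprev := integrable_finsetSum (range N) fun i hi => hint s N le_rfl i (mem_range.mp hi).le
  have hrhs := (hprev.add (hint₀.const_mul N)).const_mul (μ ^ 2 * δ ^ 2 * N ^ 2)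
  rw [← integral_finsetSum _ fun i hi => hint (s + 1) i (mem_range.mp hi).le 0 N.zero_le,
    ← integral_finsetSum _ fun i hi => hint s N le_rfl i (mem_range.mp hi).le,
    ← integral_const_mul (N : ℝ), ← integral_add hprev (hint₀.const_mul N), ← integral_const_mul,
    ← integral_const_mul]
  refine (integral_mono hcur ((hcur.const_mul _).add hrhs) fun ω => ?_).trans_eq
    (integral_add (hcur.const_mul _) hrhs)
  exact avrg_sum_norm_sub_sq_le hN Qg hLip hstar (σp (s + 1) ω) (σp s ω)
    (u := (w s · ω)) (v := (w (s + 1) · ω)) (hwepoch s ω)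
    fun i => (hwrec (s + 1) i ω).trans (by rw [hgrec])

theorem stmt_8
    {M N : ℕ} (hM : 1 ≤ M) (hN : 1 ≤ N)
    {Ω : Type} [MeasurableSpace Ω] (P : Measure Ω) [IsProbabilityMeasure P]
    (σp : ℕ → Ω → Equiv.Perm (Fin N))
    (hσmeas : ∀ t, @Measurable Ω (Equiv.Perm (Fin N)) _ ⊤ (σp t))
    (hσunif : ∀ t (π : Equiv.Perm (Fin N)),
      P {ω | σp t ω = π} = ((Nat.factorial N : ℝ≥0∞))⁻¹)
    (hσindep : iIndepFun (m := fun _ : ℕ => (⊤ : MeasurableSpace (Equiv.Perm (Fin N)))) σp P)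
    (Q : Fin N → EuclideanSpace ℝ (Fin M) → ℝ)
    (Qg : Fin N → EuclideanSpace ℝ (Fin M) → EuclideanSpace ℝ (Fin M))
    (δ ν : ℝ) (hδ : 0 < δ) (hν : 0 < ν)
    (hQdiff : ∀ n x, HasGradientAt (Q n) (Qg n x) x)
    (hQconv : ∀ n, ConvexOn ℝ Set.univ (Q n))
    (hLip : ∀ n x y, ‖Qg n x - Qg n y‖ ≤ δ * ‖x - y‖)
    (hSC : ∀ x y : EuclideanSpace ℝ (Fin M),
      ν * ‖x - y‖ ^ 2 ≤ ⟪((N : ℝ)⁻¹ • ∑ n, Qg n x) - ((N : ℝ)⁻¹ • ∑ n, Qg n y), x - y⟫)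
    (wstar : EuclideanSpace ℝ (Fin M))
    (hstar : ∑ n, Qg n wstar = 0)
    (μ : ℝ) (hμpos : 0 < μ)
    (w : ℕ → ℕ → Ω → EuclideanSpace ℝ (Fin M))
    (g : ℕ → Ω → EuclideanSpace ℝ (Fin M))
    (hw00 : ∀ ω, w 0 0 ω = 0)
    (hg0 : ∀ ω, g 0 ω = 0)
    (hwrec : ∀ (t : ℕ) (i : Fin N) (ω : Ω),
      w t ((i : ℕ) + 1) ω = w t (i : ℕ) ω - μ •
        (Qg (σp t ω i) (w t (i : ℕ) ω) - Qg (σp t ω i) (w t 0 ω) + g t ω))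
    (hgrec : ∀ (t : ℕ) (ω : Ω),
      g (t + 1) ω = (N : ℝ)⁻¹ • ∑ i : Fin N, Qg (σp t ω i) (w t (i : ℕ) ω))
    (hwepoch : ∀ (t : ℕ) (ω : Ω), w (t + 1) 0 ω = w t N ω)
    :
    -- AVRG forward inner-difference bound.
    ∀ t : ℕ, 1 ≤ t →
      ∑ i ∈ Finset.range N, ∫ ω, ‖w t i ω - w t 0 ω‖ ^ 2 ∂P ≤
        3 * μ ^ 2 * δ ^ 2 * N ^ 2 *
            (∑ i ∈ Finset.range N, ∫ ω, ‖w t i ω - w t 0 ω‖ ^ 2 ∂P) +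
          μ ^ 2 * δ ^ 2 * N ^ 2 *
            ((∑ i ∈ Finset.range N, ∫ ω, ‖w (t - 1) N ω - w (t - 1) i ω‖ ^ 2 ∂P) +
              N * ∫ ω, ‖wstar - w t 0 ω‖ ^ 2 ∂P) :=
  stmt_8_general hN P σp hσmeas Qg δ hLip wstar hstar μ w g hw00 hg0 hwrec hgrec hwepoch
end

section
/- For AVRG with step size μ > 0, the backward inner difference in epoch t ≥ 1 satisfies Σ_{i=0}^{N−1} E‖w_N^t − w_i^t‖² ≤ 3μ²δ²N² Σ_{i=0}^{N−1} E‖w_i^t − w_0^t‖² + 3μ²δ²N² ( Σ_{i=0}^{N−1} E‖w_i^{t−1} − w_N^{t−1}‖² + N · E‖w̃_0^t‖² ). -/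
open MeasureTheory ProbabilityTheory Finset
open scoped RealInnerProductSpace ENNReal

/-!
The estimate holds pathwise, before taking expectations. In epoch `t` the `i`-th step moves the
iterate by at most `μ (δ ‖w_i - w_0‖ + ‖g‖)`, so telescoping gives
`‖w_N - w_i‖ ≤ μ (δ ∑_j ‖w_j - w_0‖ + N ‖g‖)`. Since `∑ₙ ∇Q(w⋆; xₙ) = 0`, `w_0^t = w_N^{t-1}` and
`σ^{t-1}` is a permutation,
`N gᵗ = ∑ᵢ (∇Q(w_i^{t-1}) - ∇Q(w_N^{t-1})) + ∑ₙ (∇Q(w_0^t; xₙ) - ∇Q(w⋆; xₙ))`,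
hence `N ‖gᵗ‖ ≤ δ (∑ᵢ ‖w_i^{t-1} - w_N^{t-1}‖ + N ‖w̃_0^t‖)`. Squaring with
`(a + b + c)² ≤ 3 (a² + b² + c²)` and Cauchy–Schwarz gives the bound for every sample path; the
iterates are in `L²`, so it integrates.
-/

section Deterministic

variable {E : Type*} [NormedAddCommGroup E] {N : ℕ} {Qg : Fin N → E → E} {δ : ℝ}

theorem norm_sum_comp_perm_le (hLip : ∀ n x y, ‖Qg n x - Qg n y‖ ≤ δ * ‖x - y‖)
    {wstar : E} (hstar : ∑ n, Qg n wstar = 0) (π : Equiv.Perm (Fin N)) (v : Fin N → E)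
    (x : E) :
    ‖∑ i, Qg (π i) (v i)‖ ≤ δ * (∑ i, ‖v i - x‖ + N * ‖wstar - x‖) := by
  have hsplit : ∑ i, Qg (π i) (v i) =
      ∑ i, (Qg (π i) (v i) - Qg (π i) x) + ∑ n, (Qg n x - Qg n wstar) := by
    rw [sum_sub_distrib, sum_sub_distrib, hstar, sub_zero,
      Equiv.sum_comp π (fun n => Qg n x), sub_add_cancel]
  calc ‖∑ i, Qg (π i) (v i)‖
      ≤ ∑ i, ‖Qg (π i) (v i) - Qg (π i) x‖ + ∑ n, ‖Qg n x - Qg n wstar‖ := by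
        rw [hsplit]
        exact (norm_add_le _ _).trans (add_le_add (norm_sum_le _ _) (norm_sum_le _ _))
    _ ≤ ∑ i, δ * ‖v i - x‖ + ∑ _n : Fin N, δ * ‖wstar - x‖ := by
        gcongr with i _ n _
        · exact hLip _ _ _
        · rw [norm_sub_rev wstar]; exact hLip _ _ _
    _ = δ * (∑ i, ‖v i - x‖ + N * ‖wstar - x‖) := by
        rw [← mul_sum, sum_const, card_univ, Fintype.card_fin, nsmul_eq_mul]; ring

theorem norm_sub_le_of_avrg_inner_loop [NormedSpace ℝ E]
    (hLip : ∀ n x y, ‖Qg n x - Qg n y‖ ≤ δ * ‖x - y‖)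
    {μ : ℝ} (hμ : 0 ≤ μ) {π : Equiv.Perm (Fin N)} {g : E} {u : ℕ → E}
    (hu : ∀ i : Fin N, u (i + 1) = u i - μ • (Qg (π i) (u i) - Qg (π i) (u 0) + g))
    {i : ℕ} (hi : i ≤ N) :
    ‖u N - u i‖ ≤ μ * (δ * ∑ j ∈ range N, ‖u j - u 0‖ + N * ‖g‖) := by
  have hstep : ∀ j ∈ range N, ‖u j - u (j + 1)‖ ≤ μ * (δ * ‖u j - u 0‖ + ‖g‖) := by
    intro j hj
    rw [hu ⟨j, mem_range.mp hj⟩, sub_sub_cancel, norm_smul, Real.norm_eq_abs, abs_of_nonneg hμ]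
    exact mul_le_mul_of_nonneg_left ((norm_add_le _ _).trans (by gcongr; exact hLip _ _ _)) hμ
  calc ‖u N - u i‖ = dist (u i) (u N) := by rw [dist_eq_norm, norm_sub_rev]
    _ ≤ ∑ j ∈ Ico i N, dist (u j) (u (j + 1)) := dist_le_Ico_sum_dist u hi
    _ ≤ ∑ j ∈ range N, ‖u j - u (j + 1)‖ := by
        simp only [dist_eq_norm]
        exact sum_le_sum_of_subset_of_nonneg (fun j hj => mem_range.mpr (mem_Ico.mp hj).2)
          fun _ _ _ => norm_nonneg _
    _ ≤ ∑ j ∈ range N, μ * (δ * ‖u j - u 0‖ + ‖g‖) := sum_le_sum hstep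
    _ = μ * (δ * ∑ j ∈ range N, ‖u j - u 0‖ + N * ‖g‖) := by
        rw [← mul_sum, sum_add_distrib, ← mul_sum, sum_const, card_range, nsmul_eq_mul]

theorem natCast_mul_norm_inv_smul_le [NormedSpace ℝ E] (N : ℕ) (x : E) :
    (N : ℝ) * ‖(N : ℝ)⁻¹ • x‖ ≤ ‖x‖ := by
  rcases N.eq_zero_or_pos with rfl | hN
  · simp
  · rw [norm_smul, norm_inv, Real.norm_natCast, mul_inv_cancel_left₀ (by positivity)]

theorem sum_sq_norm_sub_le_of_avrg_epoch [NormedSpace ℝ E]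
    (hLip : ∀ n x y, ‖Qg n x - Qg n y‖ ≤ δ * ‖x - y‖) {wstar : E} (hstar : ∑ n, Qg n wstar = 0)
    {μ : ℝ} (hμ : 0 ≤ μ) {π π' : Equiv.Perm (Fin N)} {u v : ℕ → E}
    (hu : ∀ i : Fin N, u (i + 1) = u i - μ •
      (Qg (π i) (u i) - Qg (π i) (u 0) + (N : ℝ)⁻¹ • ∑ j : Fin N, Qg (π' j) (v j)))
    (hu0 : u 0 = v N) :
    ∑ i ∈ range N, ‖u N - u i‖ ^ 2 ≤
      3 * μ ^ 2 * δ ^ 2 * N ^ 2 * ∑ i ∈ range N, ‖u i - u 0‖ ^ 2 +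
        3 * μ ^ 2 * δ ^ 2 * N ^ 2 *
          (∑ i ∈ range N, ‖v i - v N‖ ^ 2 + N * ‖wstar - u 0‖ ^ 2) := by
  set A := ∑ i ∈ range N, ‖u i - u 0‖
  set B := ∑ i ∈ range N, ‖v i - v N‖
  set c := ‖wstar - u 0‖
  have hgrad : (N : ℝ) * ‖(N : ℝ)⁻¹ • ∑ j : Fin N, Qg (π' j) (v j)‖ ≤ δ * (B + N * c) := by
    refine (natCast_mul_norm_inv_smul_le N _).trans ?_
    have := norm_sum_comp_perm_le hLip hstar π' (fun j => v j) (v N)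
    simpa only [c, hu0, Fin.sum_univ_eq_sum_range (fun j => ‖v j - v N‖)] using this
  have hdisp : ∀ i ∈ range N, ‖u N - u i‖ ≤ μ * δ * (A + B + N * c) := by
    intro i hi
    refine (norm_sub_le_of_avrg_inner_loop hLip hμ hu (mem_range.mp hi).le).trans ?_
    linarith [mul_le_mul_of_nonneg_left hgrad hμ]
  have hA : A ^ 2 ≤ N * ∑ i ∈ range N, ‖u i - u 0‖ ^ 2 := by
    simpa using sq_sum_le_card_mul_sum_sq (s := range N) (f := fun i => ‖u i - u 0‖)
  have hB : B ^ 2 ≤ N * ∑ i ∈ range N, ‖v i - v N‖ ^ 2 := by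
    simpa using sq_sum_le_card_mul_sum_sq (s := range N) (f := fun i => ‖v i - v N‖)
  have hthree : (A + B + N * c) ^ 2 ≤ 3 * (A ^ 2 + B ^ 2 + (N * c) ^ 2) := by
    nlinarith [sq_nonneg (A - B), sq_nonneg (A - N * c), sq_nonneg (B - N * c)]
  calc ∑ i ∈ range N, ‖u N - u i‖ ^ 2 ≤ ∑ _i ∈ range N, (μ * δ * (A + B + N * c)) ^ 2 :=
        sum_le_sum fun i hi => pow_le_pow_left₀ (norm_nonneg _) (hdisp i hi) 2
    _ = μ ^ 2 * δ ^ 2 * N * (A + B + N * c) ^ 2 := by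
        rw [sum_const, card_range, nsmul_eq_mul]; ring
    _ ≤ μ ^ 2 * δ ^ 2 * N * (3 * (A ^ 2 + B ^ 2 + (N * c) ^ 2)) := by gcongr
    _ ≤ _ := by
        have : 0 ≤ μ ^ 2 * δ ^ 2 * N := by positivity
        nlinarith [mul_le_mul_of_nonneg_left (add_le_add hA hB) this]

end Deterministic

theorem MeasureTheory.MemLp.comp_lipschitzWith_family {Ω ι E F : Type*} [MeasurableSpace Ω]
    {P : Measure Ω} [IsFiniteMeasure P] {p : ℝ≥0∞} [Fintype ι] [TopologicalSpace ι]
    [DiscreteTopology ι] [NormedAddCommGroup E] [NormedAddCommGroup F]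
    {G : ι → E → F} {K : NNReal} (hG : ∀ n, LipschitzWith K (G n))
    {σ : Ω → ι} (hσ : AEStronglyMeasurable σ P) {f : Ω → E} (hf : MemLp f p P) :
    MemLp (fun ω => G (σ ω) (f ω)) p P := by
  have hcont : Continuous (Function.uncurry G) :=
    continuous_prod_of_discrete_left.mpr fun n => (hG n).continuous
  refine ((hf.norm.const_mul K).add (memLp_const (∑ n, ‖G n 0‖))).of_le
    (hcont.comp_aestronglyMeasurable₂ hσ hf.1) (Filter.Eventually.of_forall fun ω => ?_)
  calc ‖G (σ ω) (f ω)‖ ≤ ‖G (σ ω) (f ω) - G (σ ω) 0‖ + ‖G (σ ω) 0‖ := norm_le_norm_sub_add _ _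
    _ ≤ K * ‖f ω‖ + ∑ n, ‖G n 0‖ := by
      gcongr
      · simpa using (hG (σ ω)).norm_sub_le (f ω) 0
      · exact single_le_sum (f := fun n => ‖G n 0‖) (fun _ _ => norm_nonneg _) (mem_univ _)
    _ ≤ ‖K * ‖f ω‖ + ∑ n, ‖G n 0‖‖ := le_abs_self _

section Integrability

variable {Ω E : Type*} [MeasurableSpace Ω] {P : Measure Ω} [IsFiniteMeasure P]
  [NormedAddCommGroup E] [NormedSpace ℝ E] {N : ℕ} {Qg : Fin N → E → E} {K : NNReal}

theorem memLp_avrg_epoch (hLip : ∀ n, LipschitzWith K (Qg n)) {σ : Ω → Equiv.Perm (Fin N)}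
    (hσ : @Measurable Ω (Equiv.Perm (Fin N)) _ ⊤ σ) {μ : ℝ} {g : Ω → E} {u : ℕ → Ω → E}
    (hu : ∀ (i : Fin N) ω,
      u (i + 1) ω = u i ω - μ • (Qg (σ ω i) (u i ω) - Qg (σ ω i) (u 0 ω) + g ω))
    (hg : MemLp g 2 P) (h0 : MemLp (u 0) 2 P) {i : ℕ} (hi : i ≤ N) : MemLp (u i) 2 P := by
  induction i with
  | zero => exact h0
  | succ i ih =>
    have hσi : AEStronglyMeasurable (fun ω => σ ω ⟨i, hi⟩) P :=
      ((measurable_from_top (f := fun π : Equiv.Perm (Fin N) => π ⟨i, hi⟩)).comp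
        hσ).aestronglyMeasurable
    have hui := ih (Nat.le_of_succ_le hi)
    rw [show u (i + 1) = _ from funext (hu ⟨i, hi⟩)]
    exact hui.sub ((((hui.comp_lipschitzWith_family hLip hσi).sub
      (h0.comp_lipschitzWith_family hLip hσi)).add hg).const_smul μ)

theorem memLp_avrg_iterates (hLip : ∀ n, LipschitzWith K (Qg n))
    {σ : ℕ → Ω → Equiv.Perm (Fin N)} (hσ : ∀ t, @Measurable Ω (Equiv.Perm (Fin N)) _ ⊤ (σ t))
    {μ : ℝ} {w : ℕ → ℕ → Ω → E} {g : ℕ → Ω → E} (hw00 : ∀ ω, w 0 0 ω = 0)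
    (hg0 : ∀ ω, g 0 ω = 0)
    (hwrec : ∀ (t : ℕ) (i : Fin N) ω, w t (i + 1) ω =
      w t i ω - μ • (Qg (σ t ω i) (w t i ω) - Qg (σ t ω i) (w t 0 ω) + g t ω))
    (hgrec : ∀ t ω, g (t + 1) ω = (N : ℝ)⁻¹ • ∑ i : Fin N, Qg (σ t ω i) (w t i ω))
    (hwepoch : ∀ t ω, w (t + 1) 0 ω = w t N ω) (t : ℕ) :
    MemLp (g t) 2 P ∧ ∀ i ≤ N, MemLp (w t i) 2 P := by
  induction t with
  | zero =>
    have hg : MemLp (g 0) 2 P := by rw [funext hg0]; exact memLp_const 0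
    have h0 : MemLp (w 0 0) 2 P := by rw [funext hw00]; exact memLp_const 0
    exact ⟨hg, fun i hi => memLp_avrg_epoch hLip (hσ 0) (hwrec 0) hg h0 hi⟩
  | succ t ih =>
    have hg : MemLp (g (t + 1)) 2 P := by
      rw [funext (hgrec t)]
      refine MemLp.const_smul (memLp_finsetSum (f := fun i ω => Qg (σ t ω i) (w t i ω)) univ
        fun i _ => ?_) _
      exact (ih.2 i i.isLt.le).comp_lipschitzWith_family hLip
        ((measurable_from_top (f := fun π : Equiv.Perm (Fin N) => π i)).comp
          (hσ t)).aestronglyMeasurable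
    have h0 : MemLp (w (t + 1) 0) 2 P := by rw [funext (hwepoch t)]; exact ih.2 N le_rfl
    exact ⟨hg, fun i hi => memLp_avrg_epoch hLip (hσ _) (hwrec _) hg h0 hi⟩

end Integrability

theorem sum_integral_le_of_forall_sum_le {Ω ι : Type*} [MeasurableSpace Ω] {P : Measure Ω}
    {s : Finset ι} {f X Y : ι → Ω → ℝ} {Z : Ω → ℝ} {a c : ℝ}
    (hf : ∀ i ∈ s, Integrable (f i) P) (hX : ∀ i ∈ s, Integrable (X i) P)
    (hY : ∀ i ∈ s, Integrable (Y i) P) (hZ : Integrable Z P)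
    (hle : ∀ ω, ∑ i ∈ s, f i ω ≤ a * ∑ i ∈ s, X i ω + a * (∑ i ∈ s, Y i ω + c * Z ω)) :
    ∑ i ∈ s, ∫ ω, f i ω ∂P ≤
      a * ∑ i ∈ s, ∫ ω, X i ω ∂P + a * (∑ i ∈ s, ∫ ω, Y i ω ∂P + c * ∫ ω, Z ω ∂P) := by
  have hintX := integrable_finsetSum s hX
  have hintYZ : Integrable (fun ω => ∑ i ∈ s, Y i ω + c * Z ω) P :=
    (integrable_finsetSum s hY).add (hZ.const_mul c)
  calc ∑ i ∈ s, ∫ ω, f i ω ∂P = ∫ ω, ∑ i ∈ s, f i ω ∂P := (integral_finsetSum s hf).symm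
    _ ≤ ∫ ω, (a * ∑ i ∈ s, X i ω + a * (∑ i ∈ s, Y i ω + c * Z ω)) ∂P :=
        integral_mono (integrable_finsetSum s hf) ((hintX.const_mul a).add (hintYZ.const_mul a))
          hle
    _ = _ := by
        rw [integral_add (hintX.const_mul a) (hintYZ.const_mul a), integral_const_mul,
          integral_const_mul, integral_add (integrable_finsetSum s hY) (hZ.const_mul c),
          integral_const_mul, integral_finsetSum s hX, integral_finsetSum s hY]

theorem stmt_9_general
    {M N : ℕ}
    {Ω : Type} [MeasurableSpace Ω] (P : Measure Ω) [IsProbabilityMeasure P]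
    (σp : ℕ → Ω → Equiv.Perm (Fin N))
    (hσmeas : ∀ t, @Measurable Ω (Equiv.Perm (Fin N)) _ ⊤ (σp t))
    (Qg : Fin N → EuclideanSpace ℝ (Fin M) → EuclideanSpace ℝ (Fin M))
    (δ : ℝ)
    (hLip : ∀ n x y, ‖Qg n x - Qg n y‖ ≤ δ * ‖x - y‖)
    (wstar : EuclideanSpace ℝ (Fin M))
    (hstar : ∑ n, Qg n wstar = 0)
    (μ : ℝ) (hμpos : 0 < μ)
    (w : ℕ → ℕ → Ω → EuclideanSpace ℝ (Fin M))
    (g : ℕ → Ω → EuclideanSpace ℝ (Fin M))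
    (hw00 : ∀ ω, w 0 0 ω = 0)
    (hg0 : ∀ ω, g 0 ω = 0)
    (hwrec : ∀ (t : ℕ) (i : Fin N) (ω : Ω),
      w t ((i : ℕ) + 1) ω = w t (i : ℕ) ω - μ •
        (Qg (σp t ω i) (w t (i : ℕ) ω) - Qg (σp t ω i) (w t 0 ω) + g t ω))
    (hgrec : ∀ (t : ℕ) (ω : Ω),
      g (t + 1) ω = (N : ℝ)⁻¹ • ∑ i : Fin N, Qg (σp t ω i) (w t (i : ℕ) ω))
    (hwepoch : ∀ (t : ℕ) (ω : Ω), w (t + 1) 0 ω = w t N ω)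
    :
    -- AVRG backward inner-difference bound.
    ∀ t : ℕ, 1 ≤ t →
      ∑ i ∈ Finset.range N, ∫ ω, ‖w t N ω - w t i ω‖ ^ 2 ∂P ≤
        3 * μ ^ 2 * δ ^ 2 * N ^ 2 *
            (∑ i ∈ Finset.range N, ∫ ω, ‖w t i ω - w t 0 ω‖ ^ 2 ∂P) +
          3 * μ ^ 2 * δ ^ 2 * N ^ 2 *
            ((∑ i ∈ Finset.range N, ∫ ω, ‖w (t - 1) i ω - w (t - 1) N ω‖ ^ 2 ∂P) +
              N * ∫ ω, ‖wstar - w t 0 ω‖ ^ 2 ∂P) := by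
  intro t ht
  obtain ⟨s, rfl⟩ := Nat.exists_eq_add_of_le' ht
  have hLipW : ∀ n, LipschitzWith δ.toNNReal (Qg n) := fun n =>
    LipschitzWith.of_dist_le_mul fun x y => by
      rw [dist_eq_norm, dist_eq_norm, Real.coe_toNNReal']
      exact (hLip n x y).trans (by gcongr; exact le_max_left _ _)
  have hL2 := memLp_avrg_iterates (P := P) hLipW hσmeas hw00 hg0 hwrec hgrec hwepoch
  have hint : ∀ u i j, i ≤ N → j ≤ N → Integrable (fun ω => ‖w u i ω - w u j ω‖ ^ 2) P :=
    fun u i j hi hj => (((hL2 u).2 i hi).sub ((hL2 u).2 j hj)).norm.integrable_sq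
  rw [Nat.add_sub_cancel]
  exact sum_integral_le_of_forall_sum_le
    (fun i hi => hint _ N i le_rfl (mem_range.mp hi).le)
    (fun i hi => hint _ i 0 (mem_range.mp hi).le N.zero_le)
    (fun i hi => hint _ i N (mem_range.mp hi).le le_rfl)
    ((memLp_const wstar).sub ((hL2 (s + 1)).2 0 N.zero_le)).norm.integrable_sq
    fun ω => sum_sq_norm_sub_le_of_avrg_epoch hLip hstar hμpos.le
      (u := fun k => w (s + 1) k ω) (v := fun k => w s k ω)
      (fun i => by rw [hwrec, hgrec]) (hwepoch s ω)

theorem stmt_9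
    {M N : ℕ} (hM : 1 ≤ M) (hN : 1 ≤ N)
    {Ω : Type} [MeasurableSpace Ω] (P : Measure Ω) [IsProbabilityMeasure P]
    (σp : ℕ → Ω → Equiv.Perm (Fin N))
    (hσmeas : ∀ t, @Measurable Ω (Equiv.Perm (Fin N)) _ ⊤ (σp t))
    (hσunif : ∀ t (π : Equiv.Perm (Fin N)),
      P {ω | σp t ω = π} = ((Nat.factorial N : ℝ≥0∞))⁻¹)
    (hσindep : @iIndepFun Ω ℕ _ (fun _ => Equiv.Perm (Fin N)) (fun _ : ℕ => (⊤ : MeasurableSpace (Equiv.Perm (Fin N)))) σp P)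
    (Q : Fin N → EuclideanSpace ℝ (Fin M) → ℝ)
    (Qg : Fin N → EuclideanSpace ℝ (Fin M) → EuclideanSpace ℝ (Fin M))
    (δ ν : ℝ) (hδ : 0 < δ) (hν : 0 < ν)
    (hQdiff : ∀ n x, HasGradientAt (Q n) (Qg n x) x)
    (hQconv : ∀ n, ConvexOn ℝ Set.univ (Q n))
    (hLip : ∀ n x y, ‖Qg n x - Qg n y‖ ≤ δ * ‖x - y‖)
    (hSC : ∀ x y : EuclideanSpace ℝ (Fin M),
      ν * ‖x - y‖ ^ 2 ≤ ⟪((N : ℝ)⁻¹ • ∑ n, Qg n x) - ((N : ℝ)⁻¹ • ∑ n, Qg n y), x - y⟫)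
    (wstar : EuclideanSpace ℝ (Fin M))
    (hstar : ∑ n, Qg n wstar = 0)
    (μ : ℝ) (hμpos : 0 < μ)
    (w : ℕ → ℕ → Ω → EuclideanSpace ℝ (Fin M))
    (g : ℕ → Ω → EuclideanSpace ℝ (Fin M))
    (hw00 : ∀ ω, w 0 0 ω = 0)
    (hg0 : ∀ ω, g 0 ω = 0)
    (hwrec : ∀ (t : ℕ) (i : Fin N) (ω : Ω),
      w t ((i : ℕ) + 1) ω = w t (i : ℕ) ω - μ •
        (Qg (σp t ω i) (w t (i : ℕ) ω) - Qg (σp t ω i) (w t 0 ω) + g t ω))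
    (hgrec : ∀ (t : ℕ) (ω : Ω),
      g (t + 1) ω = (N : ℝ)⁻¹ • ∑ i : Fin N, Qg (σp t ω i) (w t (i : ℕ) ω))
    (hwepoch : ∀ (t : ℕ) (ω : Ω), w (t + 1) 0 ω = w t N ω)
    :
    -- AVRG backward inner-difference bound.
    ∀ t : ℕ, 1 ≤ t →
      ∑ i ∈ Finset.range N, ∫ ω, ‖w t N ω - w t i ω‖ ^ 2 ∂P ≤
        3 * μ ^ 2 * δ ^ 2 * N ^ 2 *
            (∑ i ∈ Finset.range N, ∫ ω, ‖w t i ω - w t 0 ω‖ ^ 2 ∂P) +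
          3 * μ ^ 2 * δ ^ 2 * N ^ 2 *
            ((∑ i ∈ Finset.range N, ∫ ω, ‖w (t - 1) i ω - w (t - 1) N ω‖ ^ 2 ∂P) +
              N * ∫ ω, ‖wstar - w t 0 ω‖ ^ 2 ∂P) :=
  stmt_9_general P σp hσmeas Qg δ hLip wstar hstar μ hμpos w g hw00 hg0 hwrec hgrec hwepoch
end

section
/- Single-step inner-difference bound for AVRG-type updates: suppose each Q(·; x_n) : ℝ^M → ℝ, n = 1,…,N, is differentiable with δ-Lipschitz gradient, and w⋆ satisfies Σ_{n=1}^N ∇Q(w⋆; x_n) = 0. Then for every permutation π of {1,…,N}, every w, w_0 ∈ ℝ^M, every family of vectors v_0, …, v_{N−1} ∈ ℝ^M, and every index n ∈ {1,…,N}, ‖ ∇Q(w; x_n) − ∇Q(w_0; x_n) + (1/N) Σ_{i=0}^{N−1} ∇Q(v_i; x_{π(i+1)}) ‖² ≤ 3δ² ( ‖w − w_0‖² + (1/N) Σ_{i=0}^{N−1} ‖v_i − w_0‖² + ‖w⋆ − w_0‖² ). -/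
set_option maxHeartbeats 1000000


/-- Single-step inner-difference bound for AVRG-type updates. -/
theorem stmt_13
    {M N : ℕ} (hN : 1 ≤ N)
    (Q : Fin N → EuclideanSpace ℝ (Fin M) → ℝ)
    (Qg : Fin N → EuclideanSpace ℝ (Fin M) → EuclideanSpace ℝ (Fin M))
    (hQdiff : ∀ n x, HasGradientAt (Q n) (Qg n x) x)
    (δ : ℝ) (hδ : 0 < δ)
    (hLip : ∀ n x y, ‖Qg n x - Qg n y‖ ≤ δ * ‖x - y‖)
    (wstar : EuclideanSpace ℝ (Fin M))
    (hstar : ∑ n, Qg n wstar = 0) :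
    ∀ (π : Equiv.Perm (Fin N)) (x x0 : EuclideanSpace ℝ (Fin M))
      (v : Fin N → EuclideanSpace ℝ (Fin M)) (n : Fin N),
      ‖Qg n x - Qg n x0 + (N : ℝ)⁻¹ • ∑ i, Qg (π i) (v i)‖ ^ 2 ≤
        3 * δ ^ 2 *
          (‖x - x0‖ ^ 2 + (N : ℝ)⁻¹ * ∑ i, ‖v i - x0‖ ^ 2 + ‖wstar - x0‖ ^ 2) := by
  intro π x x0 v n
  have hNpos : (0:ℝ) < N := by exact_mod_cast hN
  have hNinv : (0:ℝ) ≤ (N:ℝ)⁻¹ := by positivity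
  set a := Qg n x - Qg n x0 with ha
  set b := (N:ℝ)⁻¹ • ∑ i, (Qg (π i) (v i) - Qg (π i) x0) with hb
  set c := (N:ℝ)⁻¹ • ∑ i, (Qg (π i) x0 - Qg (π i) wstar) with hc
  have hsum0 : ∑ i, Qg (π i) wstar = 0 := by
    rw [← hstar]; exact Equiv.sum_comp π (fun i => Qg i wstar)
  have key : Qg n x - Qg n x0 + (N:ℝ)⁻¹ • ∑ i, Qg (π i) (v i) = a + b + c := by
    rw [ha, hb, hc, Finset.sum_sub_distrib, Finset.sum_sub_distrib, hsum0]
    module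
  -- bound on a
  have hA : ‖a‖ ≤ δ * ‖x - x0‖ := hLip n x x0
  -- bound on c
  have hC : ‖c‖ ≤ δ * ‖wstar - x0‖ := by
    rw [hc, norm_smul, Real.norm_eq_abs, abs_of_nonneg hNinv]
    calc (N:ℝ)⁻¹ * ‖∑ i, (Qg (π i) x0 - Qg (π i) wstar)‖
        ≤ (N:ℝ)⁻¹ * ∑ i, ‖Qg (π i) x0 - Qg (π i) wstar‖ := by
          gcongr; exact norm_sum_le _ _
      _ ≤ (N:ℝ)⁻¹ * ∑ _i : Fin N, δ * ‖wstar - x0‖ := by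
          gcongr with i _
          calc ‖Qg (π i) x0 - Qg (π i) wstar‖ ≤ δ * ‖x0 - wstar‖ := hLip _ _ _
            _ = δ * ‖wstar - x0‖ := by rw [norm_sub_rev]
      _ = δ * ‖wstar - x0‖ := by
          rw [Finset.sum_const, Finset.card_univ, Fintype.card_fin, nsmul_eq_mul]
          field_simp
  -- bound on b
  have hB : ‖b‖^2 ≤ δ^2 * ((N:ℝ)⁻¹ * ∑ i, ‖v i - x0‖^2) := by
    have h1 : ‖b‖ ≤ (N:ℝ)⁻¹ * ∑ i, δ * ‖v i - x0‖ := by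
      rw [hb, norm_smul, Real.norm_eq_abs, abs_of_nonneg hNinv]
      gcongr
      calc ‖∑ i, (Qg (π i) (v i) - Qg (π i) x0)‖
          ≤ ∑ i, ‖Qg (π i) (v i) - Qg (π i) x0‖ := norm_sum_le _ _
        _ ≤ ∑ i, δ * ‖v i - x0‖ := by gcongr with i _; exact hLip _ _ _
    have h2 : (∑ i, ‖v i - x0‖)^2 ≤ (N:ℝ) * ∑ i, ‖v i - x0‖^2 := by
      have := sq_sum_le_card_mul_sum_sq (s := (Finset.univ : Finset (Fin N)))
        (f := fun i => ‖v i - x0‖)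
      simpa using this
    have h3 : ‖b‖^2 ≤ ((N:ℝ)⁻¹ * ∑ i, δ * ‖v i - x0‖)^2 := by
      have hbn : (0:ℝ) ≤ ‖b‖ := norm_nonneg _
      nlinarith [norm_nonneg b]
    calc ‖b‖^2 ≤ ((N:ℝ)⁻¹ * ∑ i, δ * ‖v i - x0‖)^2 := h3
      _ = (N:ℝ)⁻¹^2 * δ^2 * (∑ i, ‖v i - x0‖)^2 := by
          rw [← Finset.mul_sum]; ring
      _ ≤ (N:ℝ)⁻¹^2 * δ^2 * ((N:ℝ) * ∑ i, ‖v i - x0‖^2) := by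
          gcongr
      _ = δ^2 * ((N:ℝ)⁻¹ * ∑ i, ‖v i - x0‖^2) := by
          field_simp
  -- combine
  rw [key]
  clear_value a b c
  clear ha hb hc key hsum0 hstar hQdiff hLip Q
  have hY0 : (0:ℝ) ≤ (N:ℝ)⁻¹ * ∑ i, ‖v i - x0‖ ^ 2 := by positivity
  have htr : ‖a + b + c‖ ≤ ‖a‖ + ‖b‖ + ‖c‖ := norm_add₃_le
  have hT0 := norm_nonneg (a + b + c)
  have ha0 := norm_nonneg a
  have hb0 := norm_nonneg b
  have hc0 := norm_nonneg c
  have hA0 := norm_nonneg (x - x0)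
  have hC0 := norm_nonneg (wstar - x0)
  set T := ‖a + b + c‖ with hT
  set P := ‖a‖ with hP
  set Qb := ‖b‖ with hQb
  set R := ‖c‖ with hR
  set A := ‖x - x0‖ with hA'
  set C := ‖wstar - x0‖ with hC'
  set Y := (N:ℝ)⁻¹ * ∑ i, ‖v i - x0‖ ^ 2 with hY
  clear_value T P Qb R A C Y
  clear hT hP hQb hR hA' hC' hY a b c v x x0 wstar Qg
  have h1 : T ^ 2 ≤ (P + Qb + R) ^ 2 := by nlinarith
  have h2 : (P + Qb + R) ^ 2 ≤ 3 * (P ^ 2 + Qb ^ 2 + R ^ 2) := by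
    nlinarith [sq_nonneg (P - Qb), sq_nonneg (P - R), sq_nonneg (Qb - R)]
  have h3 : P ^ 2 ≤ δ ^ 2 * A ^ 2 := by nlinarith
  have h5 : R ^ 2 ≤ δ ^ 2 * C ^ 2 := by nlinarith
  nlinarith [hB, h1, h2, h3, h5]
end
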